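/- arXiv:2601.07901 — 6 statements merged into one kernel-verified Lean document; each statement's English description precedes it below -/
import Mathlib

section
/- Let T and B be positive integers with B dividing T, and let d_t ∈ ℕ for t ∈ {1,…,T}. For each t define m_t = {τ ∈ {1,…,t−1} : τ + d_τ ≥ t}. Then B·Σ_{s=1}^{T/B} |m_{sB+1}| ≤ Σ_{t=1}^T d_t + B·T. Consequently, for N agents with delay sequences d_t(u) and corresponding sets m_t(u), setting M_s = (1/N)·Σ_{u=1}^N |m_{sB+1}(u)| and D̄_tot = (1/N)·Σ_{t=1}^T Σ_{u=1}^N d_t(u), one has B·Σ_{s=1}^{T/B} M_s ≤ D̄_tot + B·T, and in particular B·M_s ≤ D̄_tot + B·T for every s ∈ {1,…,T/B}. -/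
open Finset

/-- The set of rounds whose feedback has not yet been observed at the beginning of
round `t`, for a delay sequence `d`. -/
def missSet (d : ℕ → ℕ) (t : ℕ) : Finset ℕ :=
  (Finset.Icc 1 (t - 1)).filter fun τ => t ≤ τ + d τ

/-
Double counting: round `τ` is missing at the block boundary `s * B + 1` exactly when the
multiple `s * B` lies in the window `[τ, τ + d τ)`, and a window of length `D` contains
at most `D / B + 1` multiples of `B`. Summing `d τ + B` over the `T` rounds gives the bound;
averaging over agents and dropping the other blocks gives the rest.
-/

theorem mul_card_le_of_forall_mul_mem_Ico {S : Finset ℕ} {a B D : ℕ}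
    (hS : ∀ s ∈ S, s * B ∈ Ico a (a + D)) : B * #S ≤ D + B := by
  rcases S.eq_empty_or_nonempty with rfl | hne
  · simp
  set lo := S.min' hne
  set hi := S.max' hne
  have hsub : S ⊆ Icc lo hi := fun s hs => mem_Icc.2 ⟨S.min'_le s hs, S.le_max' s hs⟩
  have hlo := mem_Ico.1 (hS lo (S.min'_mem hne))
  have hhi := mem_Ico.1 (hS hi (S.max'_mem hne))
  have hspread : (hi - lo) * B < D := by rw [Nat.sub_mul]; omega
  calc B * #S ≤ B * (hi + 1 - lo) := by
        gcongr
        simpa using card_le_card hsub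
    _ = (hi - lo) * B + B := by
        rw [Nat.sub_add_comm (S.min'_le_max' hne), mul_comm, Nat.add_mul, one_mul]
    _ ≤ D + B := by omega

theorem missSet_mul_add_one_subset_bipartiteAbove (d : ℕ → ℕ) {T B s : ℕ} (hs : s * B ≤ T) :
    missSet d (s * B + 1) ⊆
      (Icc 1 T).bipartiteAbove (fun s τ => s * B ∈ Ico τ (τ + d τ)) s := by
  intro τ hτ
  simp only [missSet, Nat.add_sub_cancel, mem_filter, mem_Icc] at hτ
  simp only [mem_bipartiteAbove, mem_Icc, mem_Ico]
  omega

theorem mul_sum_card_missSet_le (d : ℕ → ℕ) (T B : ℕ) :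
    B * ∑ s ∈ Icc 1 (T / B), #(missSet d (s * B + 1)) ≤ (∑ t ∈ Icc 1 T, d t) + B * T := by
  set r : ℕ → ℕ → Prop := fun s τ => s * B ∈ Ico τ (τ + d τ)
  have hblock : ∀ s ∈ Icc 1 (T / B), s * B ≤ T := fun s hs =>
    (Nat.mul_le_mul_right B (mem_Icc.1 hs).2).trans (Nat.div_mul_le_self T B)
  calc B * ∑ s ∈ Icc 1 (T / B), #(missSet d (s * B + 1))
      ≤ B * ∑ s ∈ Icc 1 (T / B), #((Icc 1 T).bipartiteAbove r s) := by
        gcongr with s hs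
        exact missSet_mul_add_one_subset_bipartiteAbove d (hblock s hs)
    _ = ∑ τ ∈ Icc 1 T, B * #((Icc 1 (T / B)).bipartiteBelow r τ) := by
        rw [sum_card_bipartiteAbove_eq_sum_card_bipartiteBelow, mul_sum]
    _ ≤ ∑ τ ∈ Icc 1 T, (d τ + B) := by
        gcongr with τ
        exact mul_card_le_of_forall_mul_mem_Ico fun s hs => ((mem_bipartiteBelow r).1 hs).2
    _ = (∑ t ∈ Icc 1 T, d t) + B * T := by
        rw [sum_add_distrib, sum_const, Nat.card_Icc, smul_eq_mul, Nat.add_sub_cancel, mul_comm]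

theorem inv_card_mul_sum_le_add {ι : Type*} (s : Finset ι) {f g : ι → ℝ} {c : ℝ}
    (hc : 0 ≤ c) (h : ∀ i ∈ s, f i ≤ g i + c) :
    (#s : ℝ)⁻¹ * ∑ i ∈ s, f i ≤ (#s : ℝ)⁻¹ * ∑ i ∈ s, g i + c := by
  have hsum : ∑ i ∈ s, f i ≤ ∑ i ∈ s, g i + #s * c := by
    simpa [sum_add_distrib] using sum_le_sum h
  have hnorm : (#s : ℝ)⁻¹ * #s ≤ 1 := by
    rcases Nat.eq_zero_or_pos #s with h0 | hpos
    · simp [h0]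
    · rw [inv_mul_cancel₀ (by positivity)]
  calc (#s : ℝ)⁻¹ * ∑ i ∈ s, f i ≤ (#s : ℝ)⁻¹ * (∑ i ∈ s, g i + #s * c) := by gcongr
    _ = (#s : ℝ)⁻¹ * ∑ i ∈ s, g i + (#s : ℝ)⁻¹ * #s * c := by ring
    _ ≤ (#s : ℝ)⁻¹ * ∑ i ∈ s, g i + c := by gcongr; nlinarith

theorem mul_sum_inv_card_mul_sum_le_add {α β ι : Type*} (S : Finset α) (T : Finset β)
    (U : Finset ι) {x : α → ι → ℝ} {y : β → ι → ℝ} {b c : ℝ} (hc : 0 ≤ c)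
    (h : ∀ u ∈ U, b * ∑ s ∈ S, x s u ≤ ∑ t ∈ T, y t u + c) :
    b * ∑ s ∈ S, (#U : ℝ)⁻¹ * ∑ u ∈ U, x s u ≤ (#U : ℝ)⁻¹ * ∑ t ∈ T, ∑ u ∈ U, y t u + c := by
  calc b * ∑ s ∈ S, (#U : ℝ)⁻¹ * ∑ u ∈ U, x s u = (#U : ℝ)⁻¹ * ∑ u ∈ U, b * ∑ s ∈ S, x s u := by
        simp only [mul_sum]
        rw [sum_comm]
        exact sum_congr rfl fun _ _ => sum_congr rfl fun _ _ => by ring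
    _ ≤ (#U : ℝ)⁻¹ * ∑ u ∈ U, ∑ t ∈ T, y t u + c := inv_card_mul_sum_le_add U hc h
    _ = (#U : ℝ)⁻¹ * ∑ t ∈ T, ∑ u ∈ U, y t u + c := by rw [sum_comm]

theorem stmt_8_general (T B N : ℕ) (d : ℕ → Fin N → ℕ) :
    (∀ u : Fin N,
      B * ∑ s ∈ Finset.Icc 1 (T / B), (missSet (fun t => d t u) (s * B + 1)).card ≤
        (∑ t ∈ Finset.Icc 1 T, d t u) + B * T) ∧
    ((B : ℝ) * ∑ s ∈ Finset.Icc 1 (T / B),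
        ((N : ℝ)⁻¹ * ∑ u, ((missSet (fun t => d t u) (s * B + 1)).card : ℝ)) ≤
      (N : ℝ)⁻¹ * (∑ t ∈ Finset.Icc 1 T, ∑ u, (d t u : ℝ)) + B * T) ∧
    (∀ s ∈ Finset.Icc 1 (T / B),
      (B : ℝ) * ((N : ℝ)⁻¹ * ∑ u, ((missSet (fun t => d t u) (s * B + 1)).card : ℝ)) ≤
        (N : ℝ)⁻¹ * (∑ t ∈ Finset.Icc 1 T, ∑ u, (d t u : ℝ)) + B * T) := by
  have hagent (u : Fin N) := mul_sum_card_missSet_le (fun t => d t u) T B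
  have havg := mul_sum_inv_card_mul_sum_le_add (Icc 1 (T / B)) (Icc 1 T) univ
    (x := fun s u => ((missSet (fun t => d t u) (s * B + 1)).card : ℝ))
    (y := fun t u => (d t u : ℝ)) (b := B) (by positivity : (0 : ℝ) ≤ B * T)
    fun u _ => by exact_mod_cast hagent u
  rw [card_univ, Fintype.card_fin] at havg
  refine ⟨hagent, havg, fun s hs => le_trans ?_ havg⟩
  gcongr
  exact single_le_sum (f := fun s => (N : ℝ)⁻¹ * ∑ u,
    ((missSet (fun t => d t u) (s * B + 1)).card : ℝ)) (fun _ _ => by positivity) hs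

/-- delays vs. per-block missing observations. -/
theorem stmt_8 (T B N : ℕ) (hT : 0 < T) (hB : 0 < B) (hdvd : B ∣ T) (hN : 0 < N)
    (d : ℕ → Fin N → ℕ) :
    (∀ u : Fin N,
      B * ∑ s ∈ Finset.Icc 1 (T / B), (missSet (fun t => d t u) (s * B + 1)).card ≤
        (∑ t ∈ Finset.Icc 1 T, d t u) + B * T) ∧
    ((B : ℝ) * ∑ s ∈ Finset.Icc 1 (T / B),
        ((N : ℝ)⁻¹ * ∑ u, ((missSet (fun t => d t u) (s * B + 1)).card : ℝ)) ≤
      (N : ℝ)⁻¹ * (∑ t ∈ Finset.Icc 1 T, ∑ u, (d t u : ℝ)) + B * T) ∧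
    (∀ s ∈ Finset.Icc 1 (T / B),
      (B : ℝ) * ((N : ℝ)⁻¹ * ∑ u, ((missSet (fun t => d t u) (s * B + 1)).card : ℝ)) ≤
        (N : ℝ)⁻¹ * (∑ t ∈ Finset.Icc 1 T, ∑ u, (d t u : ℝ)) + B * T) :=
  stmt_8_general T B N d
end

section
/- Fix a matrix W ∈ ℝ^{N×N}, a scalar θ ∈ ℝ, integers B ≥ 1 and S ≥ 2, and vectors y_s(u) ∈ ℝ^n for s ∈ {1,…,S−1}, u ∈ {1,…,N}. Define y_s^{−1}(u) = y_s^0(u) = y_s(u) and, for n ≥ 0, y_s^{n+1}(u) = (1+θ)·Σ_{v=1}^N W(u,v)·y_s^n(v) − θ·y_s^{n−1}(u). Define z_1^{−1}(u) = z_1^0(u) = 0 and, for each s: z_s^{k+1}(u) = (1+θ)·Σ_{v=1}^N W(u,v)·z_s^k(v) − θ·z_s^{k−1}(u) for k = 0,…,B−1, and z_{s+1}^{−1}(u) = z_s^{B−1}(u) + y_s(u), z_{s+1}^0(u) = z_s^B(u) + y_s(u). Then for every s ∈ {1,…,S}, every u ∈ {1,…,N}, and every k ∈ {1,…,B}: z_s^k(u)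 = Σ_{l=1}^{s−1} y_l^{(s−l−1)B + k}(u). -/
open Finset

/-!
Both the increments `y_l^m` and the block iterates `z_s^k` follow the same linear three-term
(heavy-ball) recursion, and such a recursion is determined on a block by its two initial values.
Hence it suffices to check that the shifted superposition `∑_{l<s} y_l^{(s-1-l)B+k}` solves the
recursion inside block `s` and has the restart values of `z_s`; the latter holds because the
restart adds `y_s = y_s^{-1} = y_s^0` to the last two values of the previous block, which
advances every earlier shift by exactly `B`.
-/

section ShiftedSuperposition

variable {ι E : Type*} [AddCommMonoid E]

def shiftedSuperposition (x : ℕ → ℤ → ι → E) (B s : ℕ) (k : ℤ) : ι → E :=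
  ∑ l ∈ Icc 1 (s - 1), x l (((s - 1 - l) * B : ℕ) + k)

theorem shiftedSuperposition_succ (x : ℕ → ℤ → ι → E) (B : ℕ) {s : ℕ} (hs : 1 ≤ s) (k : ℤ) :
    shiftedSuperposition x B (s + 1) k = shiftedSuperposition x B s (B + k) + x s k := by
  obtain ⟨t, rfl⟩ : ∃ t, s = t + 1 := ⟨s - 1, by omega⟩
  simp only [shiftedSuperposition, Nat.add_sub_cancel]
  rw [sum_Icc_succ_top (by omega), Nat.sub_self, zero_mul, Nat.cast_zero, zero_add]
  congr 1
  refine sum_congr rfl fun l hl => ?_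
  rw [show t + 1 - l = t - l + 1 by simp only [mem_Icc] at hl; omega]
  push_cast
  ring_nf

end ShiftedSuperposition

section MomentumRecursion

variable {ι E : Type*} [Fintype ι] [AddCommGroup E] [Module ℝ E]

def IsMomentumOrbitOn (W : Matrix ι ι ℝ) (θ : ℝ) (p : ℤ → Prop) (x : ℤ → ι → E) : Prop :=
  ∀ k, p k → ∀ u, x (k + 1) u = (1 + θ) • (∑ v, W u v • x k v) - θ • x (k - 1) u

variable {W : Matrix ι ι ℝ} {θ : ℝ} {p q : ℤ → Prop} {x x' : ℤ → ι → E}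

theorem IsMomentumOrbitOn.mono (h : IsMomentumOrbitOn W θ p x) (hqp : ∀ k, q k → p k) :
    IsMomentumOrbitOn W θ q x :=
  fun k hk => h k (hqp k hk)

theorem IsMomentumOrbitOn.comp_add_left (h : IsMomentumOrbitOn W θ p x) (c : ℤ) :
    IsMomentumOrbitOn W θ (fun k => p (c + k)) (fun k => x (c + k)) := by
  intro k hk u
  simpa only [add_assoc, add_sub_assoc] using h (c + k) hk u

theorem IsMomentumOrbitOn.sum {α : Type*} {t : Finset α} {x : α → ℤ → ι → E}
    (h : ∀ l ∈ t, IsMomentumOrbitOn W θ p (x l)) :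
    IsMomentumOrbitOn W θ p (fun k u => ∑ l ∈ t, x l k u) := by
  intro k hk u
  simp only [sum_congr rfl fun l hl => h l hl k hk u, sum_sub_distrib, smul_sum]
  rw [sum_comm]

theorem IsMomentumOrbitOn.eq_of_initial {B : ℕ}
    (hx : IsMomentumOrbitOn W θ (fun k => 0 ≤ k ∧ k < B) x)
    (hx' : IsMomentumOrbitOn W θ (fun k => 0 ≤ k ∧ k < B) x')
    (hneg : x (-1) = x' (-1)) (hzero : x 0 = x' 0) :
    ∀ k : ℤ, -1 ≤ k → k ≤ B → x k = x' k := by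
  have hpair : ∀ m : ℕ, m ≤ B → x (m - 1) = x' (m - 1) ∧ x m = x' m := by
    intro m hm
    induction m with
    | zero => simpa using ⟨hneg, hzero⟩
    | succ m ih =>
      obtain ⟨hprev, hcur⟩ := ih (by omega)
      have hm' : (0 : ℤ) ≤ m ∧ (m : ℤ) < B := by omega
      refine ⟨by simpa using hcur, ?_⟩
      funext u
      push_cast
      rw [hx m hm' u, hx' m hm' u, hprev, hcur]
  intro k hk₁ hkB
  obtain ⟨m, rfl | rfl⟩ := Int.eq_nat_or_neg k
  · exact (hpair m (by omega)).2
  · obtain rfl | rfl : m = 0 ∨ m = 1 := by omega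
    · simpa using hzero
    · simpa using hneg

theorem isMomentumOrbitOn_shiftedSuperposition {x : ℕ → ℤ → ι → E} (B s : ℕ)
    (hx : ∀ l ∈ Icc 1 (s - 1), IsMomentumOrbitOn W θ (0 ≤ ·) (x l)) :
    IsMomentumOrbitOn W θ (0 ≤ ·) (shiftedSuperposition x B s) := by
  have hsum := IsMomentumOrbitOn.sum fun l hl =>
    ((hx l hl).comp_add_left (((s - 1 - l) * B : ℕ) : ℤ)).mono fun k (hk : 0 ≤ k) =>
      add_nonneg (Nat.cast_nonneg _) hk
  intro k hk u
  simpa only [shiftedSuperposition, Finset.sum_apply] using hsum k hk u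

theorem eq_shiftedSuperposition_of_restart {B S : ℕ} {x z : ℕ → ℤ → ι → E} {y : ℕ → ι → E}
    (hx : ∀ l ∈ Icc 1 (S - 1), IsMomentumOrbitOn W θ (0 ≤ ·) (x l))
    (hxInit : ∀ l ∈ Icc 1 (S - 1), x l (-1) = y l ∧ x l 0 = y l)
    (hz : ∀ s ∈ Icc 1 S, IsMomentumOrbitOn W θ (fun k => 0 ≤ k ∧ k < B) (z s))
    (hz₁ : z 1 (-1) = 0 ∧ z 1 0 = 0)
    (hzNext : ∀ s ∈ Icc 1 (S - 1),
      z (s + 1) (-1) = z s (B - 1) + y s ∧ z (s + 1) 0 = z s B + y s) :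
    ∀ s, 1 ≤ s → s ≤ S → ∀ k : ℤ, -1 ≤ k → k ≤ B → z s k = shiftedSuperposition x B s k := by
  have hsuper : ∀ s ≤ S,
      IsMomentumOrbitOn W θ (fun k => 0 ≤ k ∧ k < B) (shiftedSuperposition x B s) :=
    fun s hsS => (isMomentumOrbitOn_shiftedSuperposition B s fun l hl =>
      hx l (by simp only [mem_Icc] at hl ⊢; omega)).mono fun _ hk => hk.1
  intro s hs
  induction s, hs using Nat.le_induction with
  | base =>
    intro hS
    refine (hz 1 (by simp only [mem_Icc]; omega)).eq_of_initial (hsuper 1 hS) ?_ ?_ <;>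
      simp [shiftedSuperposition, hz₁]
  | succ s hs ih =>
    intro hsS
    have hsS' : s ∈ Icc 1 (S - 1) := by simp only [mem_Icc]; omega
    refine (hz (s + 1) (by simp only [mem_Icc]; omega)).eq_of_initial (hsuper _ hsS) ?_ ?_
    all_goals rw [shiftedSuperposition_succ x B hs, ← ih (by omega) _ (by omega) (by omega)]
    · rw [(hzNext s hsS').1, (hxInit s hsS').1, sub_eq_add_neg]
    · rw [(hzNext s hsS').2, (hxInit s hsS').2, add_zero]

end MomentumRecursion

theorem stmt_10_general (n N B S : ℕ)
    (W : Matrix (Fin N) (Fin N) ℝ) (θ : ℝ)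
    (y : ℕ → Fin N → EuclideanSpace ℝ (Fin n))
    (yIter : ℕ → ℤ → Fin N → EuclideanSpace ℝ (Fin n))
    (hyInit : ∀ s ∈ Finset.Icc 1 (S - 1), ∀ u,
      yIter s (-1) u = y s u ∧ yIter s 0 u = y s u)
    (hyRec : ∀ s ∈ Finset.Icc 1 (S - 1), ∀ m : ℤ, 0 ≤ m → ∀ u,
      yIter s (m + 1) u = (1 + θ) • (∑ v, W u v • yIter s m v) - θ • yIter s (m - 1) u)
    (z : ℕ → ℤ → Fin N → EuclideanSpace ℝ (Fin n))
    (hz1 : ∀ u, z 1 (-1) u = 0 ∧ z 1 0 u = 0)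
    (hzRec : ∀ s ∈ Finset.Icc 1 S, ∀ k ∈ Finset.Ico (0 : ℤ) (B : ℤ), ∀ u,
      z s (k + 1) u = (1 + θ) • (∑ v, W u v • z s k v) - θ • z s (k - 1) u)
    (hzNext : ∀ s ∈ Finset.Icc 1 (S - 1), ∀ u,
      z (s + 1) (-1) u = z s ((B : ℤ) - 1) u + y s u ∧
        z (s + 1) 0 u = z s (B : ℤ) u + y s u) :
    ∀ s ∈ Finset.Icc 1 S, ∀ u, ∀ k ∈ Finset.Icc 1 B,
      z s (k : ℤ) u =
        ∑ l ∈ Finset.Icc 1 (s - 1), yIter l (((s - l - 1) * B + k : ℕ) : ℤ) u := by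
  have hx : ∀ l ∈ Icc 1 (S - 1), IsMomentumOrbitOn W θ (0 ≤ ·) (yIter l) := hyRec
  have hz : ∀ s ∈ Icc 1 S, IsMomentumOrbitOn W θ (fun k => 0 ≤ k ∧ k < B) (z s) :=
    fun s hs k hk => hzRec s hs k (mem_Ico.mpr hk)
  have hclosed := eq_shiftedSuperposition_of_restart hx
    (fun l hl => ⟨funext fun u => (hyInit l hl u).1, funext fun u => (hyInit l hl u).2⟩) hz
    ⟨funext fun u => (hz1 u).1, funext fun u => (hz1 u).2⟩
    (fun s hs => ⟨funext fun u => (hzNext s hs u).1, funext fun u => (hzNext s hs u).2⟩)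
  intro s hs u k hk
  obtain ⟨hs1, hsS⟩ := mem_Icc.mp hs
  rw [hclosed s hs1 hsS k (by omega) (by exact_mod_cast (mem_Icc.mp hk).2), shiftedSuperposition,
    Finset.sum_apply]
  refine sum_congr rfl fun l _ => ?_
  rw [Nat.sub_right_comm]
  push_cast
  rfl

/-- closed form of the block gossip iterates `z_s^k` in terms of
the gossip-propagated increments `y_l^n`. -/
theorem stmt_10 (n N B S : ℕ) (hB : 1 ≤ B) (hS : 2 ≤ S)
    (W : Matrix (Fin N) (Fin N) ℝ) (θ : ℝ)
    (y : ℕ → Fin N → EuclideanSpace ℝ (Fin n))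
    (yIter : ℕ → ℤ → Fin N → EuclideanSpace ℝ (Fin n))
    (hyInit : ∀ s ∈ Finset.Icc 1 (S - 1), ∀ u,
      yIter s (-1) u = y s u ∧ yIter s 0 u = y s u)
    (hyRec : ∀ s ∈ Finset.Icc 1 (S - 1), ∀ m : ℤ, 0 ≤ m → ∀ u,
      yIter s (m + 1) u = (1 + θ) • (∑ v, W u v • yIter s m v) - θ • yIter s (m - 1) u)
    (z : ℕ → ℤ → Fin N → EuclideanSpace ℝ (Fin n))
    (hz1 : ∀ u, z 1 (-1) u = 0 ∧ z 1 0 u = 0)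
    (hzRec : ∀ s ∈ Finset.Icc 1 S, ∀ k ∈ Finset.Ico (0 : ℤ) (B : ℤ), ∀ u,
      z s (k + 1) u = (1 + θ) • (∑ v, W u v • z s k v) - θ • z s (k - 1) u)
    (hzNext : ∀ s ∈ Finset.Icc 1 (S - 1), ∀ u,
      z (s + 1) (-1) u = z s ((B : ℤ) - 1) u + y s u ∧
        z (s + 1) 0 u = z s (B : ℤ) u + y s u) :
    ∀ s ∈ Finset.Icc 1 S, ∀ u, ∀ k ∈ Finset.Icc 1 B,
      z s (k : ℤ) u =
        ∑ l ∈ Finset.Icc 1 (s - 1), yIter l (((s - l - 1) * B + k : ℕ) : ℤ) u :=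
  stmt_10_general n N B S W θ y yIter hyInit hyRec z hz1 hzRec hzNext
end

section
/- Let W ∈ ℝ^{N×N} be symmetric, doubly stochastic, positive semidefinite with second-largest eigenvalue σ₂(W) ∈ [0,1), let θ = 1/(1+√(1−σ₂(W)²)), b = 1 − (1 − 1/√2)·√(1−σ₂(W)), and B = ⌈√2·ln(N√(14N))/((√2−1)·√(1−σ₂(W)))⌉. Let y_l(v) ∈ ℝ^n for l ∈ {1,…,S−1}, v ∈ {1,…,N} be arbitrary, and let z_s^k(u) be given by the block gossip recursion: z_1^{−1}(u) = z_1^0(u) = 0; z_s^{k+1}(u) = (1+θ)·Σ_v W(u,v)·z_s^k(v) − θ·z_s^{k−1}(u) for k = 0,…,B−1; z_{s+1}^{−1}(u) = z_s^{B−1}(u) + y_s(u), z_{s+1}^0(u) = z_s^B(u) + y_s(u). Then for every u ∈ {1,…,N} and every s ∈ {1,…,S}: ‖z_s^B(u) − (1/N)·Σ_{l=1}^{s−1} Σ_{v=1}^N y_l(v)‖₂ ≤ (2/(N√N))·Σ_{l=1}^{s−1} b^{(s−l−1)B}·√(Σ_{v=1}^N ‖y_l(v)‖₂²). -/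
/-!
Inside a block the iterates obey `x ↦ (1 + θ) W x - θ x'`, so `z_s^B = ∑ l, q_{m_l}(W) y_l` with
`m_l = (s - l - 1) B + B + 1` and the polynomials `q₀ = q₁ = 1`,
`q_{k+2}(λ) = (1 + θ) λ q_{k+1}(λ) - θ q_k(λ)`. Since `q_k(1) = 1`, the rows of `q_k(W)` sum to one,
so replacing `y_l` by its deviation from the mean shifts `z_s^B` by exactly the running average.
A zero-sum vector is orthogonal to every eigenvector of `W` with eigenvalue above `σ₂` (such
eigenvectors are constant), and for `λ ∈ [0, σ₂]` the quadratic form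
`q_{k+1}² - (1 + θ) λ q_{k+1} q_k + θ q_k²` equals `θ^k (1 + θ)(1 - λ)`; completing the square gives
`q_{m+1}(λ)² ≤ 4 θ^m`, and `θ ≤ b²` for the momentum `θ` and the rate `b`. Finally `B` is chosen
so that `b^B ≤ 1 / (N √(14 N))`.
-/

open Finset

/-- The second-largest eigenvalue of a symmetric doubly stochastic matrix `W`,
expressed as the maximal Rayleigh quotient over the orthogonal complement of the
all-ones vector (the top eigenvector). -/
noncomputable def sigma2 {N : ℕ} (W : Matrix (Fin N) (Fin N) ℝ) : ℝ :=
  sSup {r : ℝ | ∃ x : EuclideanSpace ℝ (Fin N),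
    ‖x‖ = 1 ∧ (∑ i, x i) = 0 ∧ r = ∑ i, ∑ j, W i j * x i * x j}

open Matrix

/-- `accelPoly θ a j` sends the common value of the two seeds of a block to its `j`-th entry, the
seeds being entries `0` and `1` (the paper's `z^{-1}` and `z^0`). -/
noncomputable def accelPoly {R : Type*} [Ring R] [Algebra ℝ R] (θ : ℝ) (a : R) : ℕ → R
  | 0 => 1
  | 1 => 1
  | k + 2 => (1 + θ) • (a * accelPoly θ a (k + 1)) - θ • accelPoly θ a k

theorem accelPoly_one {R : Type*} [Ring R] [Algebra ℝ R] (θ : ℝ) : ∀ k, accelPoly θ (1 : R) k = 1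
  | 0 | 1 => rfl
  | k + 2 => by
    rw [accelPoly, accelPoly_one θ (k + 1), accelPoly_one θ k, one_mul, add_smul, one_smul,
      add_sub_cancel_right]

theorem accelPoly_invariant (θ lam : ℝ) (k : ℕ) :
    accelPoly θ lam (k + 1) ^ 2 - (1 + θ) * lam * accelPoly θ lam (k + 1) * accelPoly θ lam k
      + θ * accelPoly θ lam k ^ 2 = θ ^ k * ((1 + θ) * (1 - lam)) := by
  induction k with
  | zero => simp only [accelPoly]; ring
  | succ k ih =>
    simp only [accelPoly, smul_eq_mul] at ih ⊢
    linear_combination θ * ih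

theorem momentum_margin {σ θ lam : ℝ} (hσ0 : 0 ≤ σ) (hσ1 : σ < 1)
    (hθ : θ = 1 / (1 + √(1 - σ ^ 2))) (hlam0 : 0 ≤ lam) (hlamσ : lam ≤ σ) :
    θ * (1 + θ) * (1 - lam) ≤ 4 * θ - ((1 + θ) * lam) ^ 2 := by
  set τ := √(1 - σ ^ 2)
  have hτ2 : τ ^ 2 = 1 - σ ^ 2 := Real.sq_sqrt (by nlinarith)
  have hτ0 : 0 ≤ τ := Real.sqrt_nonneg _
  have hθ0 : 0 < θ := hθ ▸ by positivity
  have hθ1 : θ ≤ 1 := by rw [hθ, div_le_one (by positivity)]; linarith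
  set g : ℝ → ℝ := fun μ => 4 * θ - ((1 + θ) * μ) ^ 2 - θ * (1 + θ) * (1 - μ)
  suffices 0 ≤ g lam by simp only [g] at this; linarith
  have hg0 : 0 ≤ g 0 := by simp only [g]; nlinarith
  have hgσ : 0 ≤ g σ := by
    have h : g σ = (τ ^ 2 * ((τ + 1) * (τ + 3)) - (2 + τ) * (1 - σ)) / (1 + τ) ^ 2 := by
      simp only [g]; rw [hθ]; field_simp; linear_combination (-(τ + 2) ^ 2) * hτ2
    have : 1 - σ ≤ τ ^ 2 := by nlinarith
    have : 0 ≤ τ ^ 2 * ((τ + 1) * (τ + 3)) - (2 + τ) * (1 - σ) := by nlinarith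
    rw [h]; positivity
  -- `g` is a concave quadratic, hence nonnegative between two points where it is
  have hconc : σ * g lam = (σ - lam) * g 0 + lam * g σ + (1 + θ) ^ 2 * σ * lam * (σ - lam) := by
    simp only [g]; ring
  rcases hσ0.eq_or_lt with rfl | hσpos
  · rwa [le_antisymm hlamσ hlam0]
  · refine nonneg_of_mul_nonneg_right (hconc ▸ ?_) hσpos
    have := sub_nonneg.2 hlamσ
    have := mul_nonneg this hg0
    have := mul_nonneg hlam0 hgσ
    have : 0 ≤ (1 + θ) ^ 2 * σ * lam * (σ - lam) := by positivity
    linarith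

theorem sq_accelPoly_succ_le {σ θ lam : ℝ} (hσ0 : 0 ≤ σ) (hσ1 : σ < 1)
    (hθ : θ = 1 / (1 + √(1 - σ ^ 2))) (hlam0 : 0 ≤ lam) (hlamσ : lam ≤ σ) (m : ℕ) :
    accelPoly θ lam (m + 1) ^ 2 ≤ 4 * θ ^ m := by
  have hinv := accelPoly_invariant θ lam m
  have hmargin := momentum_margin hσ0 hσ1 hθ hlam0 hlamσ
  have hθ0 : 0 < θ := hθ ▸ by positivity
  set x := accelPoly θ lam (m + 1)
  set y := accelPoly θ lam m
  set a := (1 + θ) * lam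
  have hpos : 0 < θ * (1 + θ) * (1 - lam) := by
    have : 0 < 1 - lam := by linarith
    positivity
  have hsq : (4 * θ - a ^ 2) * x ^ 2 ≤ 4 * θ ^ m * (4 * θ - a ^ 2) := calc
    (4 * θ - a ^ 2) * x ^ 2
        = 4 * θ * (θ ^ m * ((1 + θ) * (1 - lam))) - (2 * θ * y - a * x) ^ 2 := by
      rw [← hinv]; ring
    _ ≤ 4 * θ ^ m * (θ * (1 + θ) * (1 - lam)) := by nlinarith [sq_nonneg (2 * θ * y - a * x)]
    _ ≤ 4 * θ ^ m * (4 * θ - a ^ 2) := by gcongr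
  exact le_of_mul_le_mul_left (by linarith) (by linarith : 0 < 4 * θ - a ^ 2)

theorem one_le_one_add_mul_sq {δ : ℝ} (hδ0 : 0 ≤ δ) (hδ1 : δ ≤ 1) :
    1 ≤ (1 + δ) * (1 - (1 - 1 / √2) * δ) ^ 2 := by
  obtain ⟨c, hc⟩ : ∃ c, c = 1 - 1 / √2 := ⟨_, rfl⟩
  rw [← hc]
  have hs : √2 ^ 2 = 2 := Real.sq_sqrt zero_le_two
  have hs0 : 0 < √2 := by positivity
  have hc2 : 2 * (1 - c) ^ 2 = 1 := by
    rw [hc, sub_sub_cancel, div_pow, hs]; norm_num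
  have hc0 : 0 ≤ c := by
    rw [hc, sub_nonneg, div_le_one hs0]; nlinarith
  have hc38 : c ≤ 3 / 8 := by
    rw [hc, sub_le_comm, le_div_iff₀ hs0]; nlinarith
  have h : (1 + δ) * (1 - c * δ) ^ 2 - 1 = δ * (1 - δ) * (1 - 2 * c - c ^ 2 * δ) := by
    linear_combination δ ^ 2 * hc2
  have : 0 ≤ 1 - 2 * c - c ^ 2 * δ := by nlinarith
  have : 0 ≤ δ * (1 - δ) * (1 - 2 * c - c ^ 2 * δ) := by
    have := sub_nonneg.2 hδ1; positivity
  linarith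

theorem momentum_le_rate_sq {σ θ b : ℝ} (hσ0 : 0 ≤ σ) (hσ1 : σ < 1)
    (hθ : θ = 1 / (1 + √(1 - σ ^ 2))) (hb : b = 1 - (1 - 1 / √2) * √(1 - σ)) : θ ≤ b ^ 2 := by
  have hδ1 : √(1 - σ) ≤ 1 := Real.sqrt_le_one.2 (by linarith)
  have hδτ : √(1 - σ) ≤ √(1 - σ ^ 2) := Real.sqrt_le_sqrt (by nlinarith)
  have hb1 := one_le_one_add_mul_sq (Real.sqrt_nonneg _) hδ1
  rw [← hb] at hb1
  rw [hθ, div_le_iff₀ (by positivity)]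
  nlinarith [sq_nonneg b]

theorem rate_nonneg {σ : ℝ} (hσ0 : 0 ≤ σ) : 0 ≤ 1 - (1 - 1 / √2) * √(1 - σ) := by
  have h1 : √(1 - σ) ≤ 1 := Real.sqrt_le_one.2 (by linarith)
  have h2 : 0 ≤ 1 / √2 * √(1 - σ) := by positivity
  nlinarith

theorem pow_le_inv_of_le_exp {b r A : ℝ} {B : ℕ} (hb0 : 0 ≤ b) (hbr : b ≤ Real.exp (-r))
    (hA : 0 < A) (hB : Real.log A ≤ r * B) : b ^ B ≤ A⁻¹ := calc
  b ^ B ≤ Real.exp (-r) ^ B := by gcongr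
  _ = Real.exp (-(r * B)) := by rw [← Real.exp_nat_mul]; ring_nf
  _ ≤ Real.exp (-Real.log A) := by gcongr
  _ = A⁻¹ := by rw [Real.exp_neg, Real.exp_log hA]

theorem rate_pow_le_inv {N B : ℕ} (hN : 1 ≤ N) {σ b : ℝ} (hσ0 : 0 ≤ σ) (hσ1 : σ < 1)
    (hb : b = 1 - (1 - 1 / √2) * √(1 - σ))
    (hB : B = ⌈√2 * Real.log (N * √(14 * N)) / ((√2 - 1) * √(1 - σ))⌉₊) :
    b ^ B ≤ ((N : ℝ) * √N)⁻¹ := by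
  set r := (1 - 1 / √2) * √(1 - σ)
  have hs : 1 < √2 := by rw [Real.lt_sqrt zero_le_one]; norm_num
  have hδ : 0 < √(1 - σ) := Real.sqrt_pos.2 (by linarith)
  have hN' : (1 : ℝ) ≤ N := by exact_mod_cast hN
  have hA : (N : ℝ) * √N ≤ N * √(14 * N) := by gcongr; linarith
  have hr : r = (√2 - 1) * √(1 - σ) / √2 := by simp only [r]; field_simp
  refine (pow_le_inv_of_le_exp (r := r) ?_ ?_ (by positivity) ?_).trans
    (inv_anti₀ (by positivity) hA)
  · exact hb ▸ rate_nonneg hσ0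
  · rw [hb]; linarith [Real.add_one_le_exp (-r)]
  · have hceil := Nat.le_ceil (√2 * Real.log (N * √(14 * N)) / ((√2 - 1) * √(1 - σ)))
    rw [← hB, div_le_iff₀ (by nlinarith)] at hceil
    rw [hr, div_mul_eq_mul_div, le_div_iff₀ (by positivity)]
    linarith

section Eigenbasis

variable {ι E : Type*} [Fintype ι] [NormedAddCommGroup E] [InnerProductSpace ℝ E]
  {T : E →ₗ[ℝ] E} (β : OrthonormalBasis ι ℝ E) {c : ι → ℝ}

theorem inner_apply_of_eigenbasis (hT : ∀ j, T (β j) = c j • β j) (w : E) (j : ι) :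
    inner ℝ (β j) (T w) = c j * inner ℝ (β j) w := by
  have hTw : T w = ∑ i, (c i * inner ℝ (β i) w) • β i := by
    conv_lhs => rw [← β.sum_repr' w]
    simp only [map_sum, map_smul, hT, smul_smul, mul_comm]
  rw [hTw, β.orthonormal.inner_right_fintype]

theorem norm_sq_apply_le_of_eigenbasis (hT : ∀ j, T (β j) = c j • β j) {C : ℝ} {w : E}
    (hw : ∀ j, inner ℝ (β j) w = 0 ∨ c j ^ 2 ≤ C) : ‖T w‖ ^ 2 ≤ C * ‖w‖ ^ 2 := by
  rw [← β.sum_sq_norm_inner_right, ← β.sum_sq_norm_inner_right, mul_sum]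
  refine sum_le_sum fun j _ => ?_
  rw [inner_apply_of_eigenbasis β hT, Real.norm_eq_abs, Real.norm_eq_abs, sq_abs, sq_abs, mul_pow]
  rcases hw j with h | h
  · simp [h]
  · exact mul_le_mul_of_nonneg_right h (sq_nonneg _)

end Eigenbasis

section Sigma2

variable {N : ℕ} (W : Matrix (Fin N) (Fin N) ℝ)

theorem norm_sq_toLp_eq_dotProduct (x : Fin N → ℝ) : ‖WithLp.toLp 2 x‖ ^ 2 = x ⬝ᵥ x := by
  rw [← real_inner_self_eq_norm_sq, EuclideanSpace.inner_toLp_toLp]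
  simp

theorem bddAbove_rayleigh :
    BddAbove {r : ℝ | ∃ x : EuclideanSpace ℝ (Fin N),
      ‖x‖ = 1 ∧ (∑ i, x i) = 0 ∧ r = ∑ i, ∑ j, W i j * x i * x j} := by
  refine ⟨∑ i, ∑ j, |W i j|, ?_⟩
  rintro r ⟨x, hx1, -, rfl⟩
  have hx : ∀ i, |x i| ≤ 1 := fun i => hx1 ▸ PiLp.norm_apply_le x i
  refine sum_le_sum fun i _ => sum_le_sum fun j _ => ?_
  calc W i j * x i * x j ≤ |W i j * x i * x j| := le_abs_self _
    _ = |W i j| * (|x i| * |x j|) := by rw [abs_mul, abs_mul, mul_assoc]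
    _ ≤ |W i j| * (1 * 1) := by gcongr; exacts [hx i, hx j]
    _ = |W i j| := by ring

theorem dotProduct_mulVec_le_sigma2_mul {x : Fin N → ℝ} (hx : ∑ i, x i = 0) :
    x ⬝ᵥ (W *ᵥ x) ≤ sigma2 W * (x ⬝ᵥ x) := by
  rcases eq_or_ne x 0 with rfl | hx0
  · simp
  set t := ‖WithLp.toLp 2 x‖
  have ht : 0 < t := norm_pos_iff.2 (by simpa using hx0)
  have ht2 : t ^ 2 = x ⬝ᵥ x := norm_sq_toLp_eq_dotProduct x
  have hunit : ‖WithLp.toLp 2 (t⁻¹ • x)‖ = 1 := by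
    rw [WithLp.toLp_smul, norm_smul, norm_inv, Real.norm_of_nonneg ht.le, inv_mul_cancel₀ ht.ne']
  have hmem := le_csSup (bddAbove_rayleigh W)
    ⟨WithLp.toLp 2 (t⁻¹ • x), hunit, by simp [← mul_sum, hx], rfl⟩
  have hscale : ∑ i, ∑ j, W i j * (WithLp.toLp 2 (t⁻¹ • x)) i * (WithLp.toLp 2 (t⁻¹ • x)) j
      = (x ⬝ᵥ (W *ᵥ x)) / t ^ 2 := by
    simp only [Pi.smul_apply, smul_eq_mul, dotProduct, mulVec, sum_div, mul_sum]
    refine sum_congr rfl fun i _ => sum_congr rfl fun j _ => ?_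
    field_simp
  rw [hscale, div_le_iff₀ (by positivity), ht2] at hmem
  exact hmem

end Sigma2

theorem eq_const_of_mulVec_eq_smul_of_sigma2_lt {N : ℕ} {W : Matrix (Fin N) (Fin N) ℝ}
    (hWrow : ∀ i, ∑ j, W i j = 1) (hWcol : ∀ j, ∑ i, W i j = 1)
    {v : Fin N → ℝ} {μ : ℝ} (hv : W *ᵥ v = μ • v) (hμ : sigma2 W < μ) :
    v = fun _ => (∑ i, v i) / N := by
  set c := (∑ i, v i) / N
  have hW1 : W *ᵥ (fun _ => c) = fun _ => c := by
    ext i; simp [mulVec, dotProduct, ← sum_mul, hWrow]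
  -- summing the eigen-equation with the column sums shows that `μ = 1` unless `∑ v = 0`
  have hsum : (μ - 1) * ∑ i, v i = 0 := by
    have := congrArg (fun x => ∑ i, x i) hv
    simp only [mulVec, dotProduct, Pi.smul_apply, smul_eq_mul] at this
    rw [sum_comm] at this
    simp only [← sum_mul, hWcol, one_mul, ← mul_sum] at this
    linarith
  have hc : μ * c = c := by
    have : (μ - 1) * c = 0 := by simp only [c, mul_div_assoc', hsum, zero_div]
    linarith
  set x := v - fun _ => c
  have hx : W *ᵥ x = μ • x := by
    ext i
    simp [x, mulVec_sub, hW1, hv, mul_sub, hc]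
  have hxsum : ∑ i, x i = 0 := by
    rcases Nat.eq_zero_or_pos N with rfl | hN
    · simp
    · simp [x, sum_sub_distrib, c, mul_div_cancel₀ _ (Nat.cast_ne_zero.2 hN.ne' : (N : ℝ) ≠ 0)]
  have hray := dotProduct_mulVec_le_sigma2_mul W hxsum
  rw [hx, dotProduct_smul, smul_eq_mul] at hray
  have hxx : x ⬝ᵥ x = 0 :=
    le_antisymm (by nlinarith [dotProduct_self_star_nonneg x]) (dotProduct_self_star_nonneg x)
  rw [dotProduct_self_eq_zero, sub_eq_zero] at hxx
  exact hxx

theorem accelPoly_mulVec_of_mulVec_eq_smul {ι : Type*} [Fintype ι] [DecidableEq ι]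
    {W : Matrix ι ι ℝ} {v : ι → ℝ} {μ : ℝ} (hv : W *ᵥ v = μ • v) (θ : ℝ) :
    ∀ k, accelPoly θ W k *ᵥ v = accelPoly θ μ k • v
  | 0 | 1 => by simp [accelPoly]
  | k + 2 => by
    simp only [accelPoly, sub_mulVec, smul_mulVec, ← mulVec_mulVec,
      accelPoly_mulVec_of_mulVec_eq_smul hv θ (k + 1), accelPoly_mulVec_of_mulVec_eq_smul hv θ k,
      mulVec_smul, hv, smul_eq_mul, smul_smul, sub_smul]
    ring_nf

theorem accelPoly_mulVec_one {N : ℕ} {W : Matrix (Fin N) (Fin N) ℝ} (hWrow : ∀ i, ∑ j, W i j = 1)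
    (θ : ℝ) (k : ℕ) : accelPoly θ W k *ᵥ (fun _ => 1) = fun _ => 1 := by
  have hW1 : W *ᵥ (fun _ => 1) = (1 : ℝ) • fun _ => 1 := by
    ext i; simp [mulVec, dotProduct, hWrow]
  rw [accelPoly_mulVec_of_mulVec_eq_smul hW1, accelPoly_one, one_smul]

theorem sum_accelPoly_smul_sub {N : ℕ} {W : Matrix (Fin N) (Fin N) ℝ}
    (hWrow : ∀ i, ∑ j, W i j = 1) (θ : ℝ) (k : ℕ) {E : Type*} [AddCommGroup E] [Module ℝ E]
    (y : Fin N → E) (c : E) (u : Fin N) :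
    ∑ v, accelPoly θ W k u v • (y v - c) = ∑ v, accelPoly θ W k u v • y v - c := by
  have hrow : ∑ v, accelPoly θ W k u v = 1 := by
    simpa [mulVec, dotProduct] using congrFun (accelPoly_mulVec_one hWrow θ k) u
  simp only [smul_sub, sum_sub_distrib, ← sum_smul, hrow, one_smul]

theorem dotProduct_accelPoly_mulVec_le {N : ℕ} {W : Matrix (Fin N) (Fin N) ℝ} (hWpsd : W.PosSemidef)
    (hWrow : ∀ i, ∑ j, W i j = 1) (hWcol : ∀ j, ∑ i, W i j = 1)
    (hσ0 : 0 ≤ sigma2 W) (hσ1 : sigma2 W < 1) {θ : ℝ}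
    (hθ : θ = 1 / (1 + √(1 - sigma2 W ^ 2))) (m : ℕ) {w : Fin N → ℝ} (hw : ∑ i, w i = 0) :
    accelPoly θ W (m + 1) *ᵥ w ⬝ᵥ accelPoly θ W (m + 1) *ᵥ w ≤ 4 * θ ^ m * (w ⬝ᵥ w) := by
  set β := hWpsd.1.eigenvectorBasis
  set μ := hWpsd.1.eigenvalues
  have hT : ∀ j, toLpLin 2 2 (accelPoly θ W (m + 1)) (β j)
      = accelPoly θ (μ j) (m + 1) • β j := fun j => by
    rw [toLpLin_apply,
      accelPoly_mulVec_of_mulVec_eq_smul (hWpsd.1.mulVec_eigenvectorBasis j), WithLp.toLp_smul,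
      WithLp.toLp_ofLp]
  have hcoeff : ∀ j,
      inner ℝ (β j) (WithLp.toLp 2 w) = 0 ∨ accelPoly θ (μ j) (m + 1) ^ 2 ≤ 4 * θ ^ m := by
    intro j
    by_cases hμ : μ j ≤ sigma2 W
    · exact .inr (sq_accelPoly_succ_le hσ0 hσ1 hθ (hWpsd.eigenvalues_nonneg j) hμ m)
    · left
      have hconst := eq_const_of_mulVec_eq_smul_of_sigma2_lt hWrow hWcol
        (hWpsd.1.mulVec_eigenvectorBasis j) (not_le.1 hμ)
      rw [EuclideanSpace.inner_eq_star_dotProduct, hconst]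
      simp [dotProduct, ← sum_mul, hw]
  have := norm_sq_apply_le_of_eigenbasis β hT hcoeff
  rwa [toLpLin_apply, WithLp.ofLp_toLp, norm_sq_toLp_eq_dotProduct,
    norm_sq_toLp_eq_dotProduct] at this

theorem sum_norm_sub_mean_sq_le {ι E : Type*} [Fintype ι] [NormedAddCommGroup E]
    [InnerProductSpace ℝ E] (y : ι → E) :
    ∑ v, ‖y v - (Fintype.card ι : ℝ)⁻¹ • ∑ v', y v'‖ ^ 2 ≤ ∑ v, ‖y v‖ ^ 2 := by
  have hk : (0 : ℝ) ≤ Fintype.card ι := Nat.cast_nonneg _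
  have h : ∑ v, ‖y v - (Fintype.card ι : ℝ)⁻¹ • ∑ v', y v'‖ ^ 2
      = ∑ v, ‖y v‖ ^ 2 - (Fintype.card ι : ℝ)⁻¹ * ‖∑ v, y v‖ ^ 2 := by
    simp only [norm_sub_sq_real, sum_add_distrib, sum_sub_distrib, ← mul_sum, ← sum_inner,
      sum_const, card_univ, nsmul_eq_mul, inner_smul_right, real_inner_self_eq_norm_sq, norm_smul,
      mul_pow, norm_inv, Real.norm_of_nonneg hk]
    rcases hk.eq_or_lt with hk0 | hk0
    · simp [← hk0]
    · field_simp; ring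
  rw [h]
  have : 0 ≤ (Fintype.card ι : ℝ)⁻¹ * ‖∑ v, y v‖ ^ 2 := by positivity
  linarith

theorem norm_sq_sum_accelPoly_smul_le {N : ℕ} {W : Matrix (Fin N) (Fin N) ℝ}
    (hWpsd : W.PosSemidef) (hWrow : ∀ i, ∑ j, W i j = 1) (hWcol : ∀ j, ∑ i, W i j = 1)
    (hσ0 : 0 ≤ sigma2 W) (hσ1 : sigma2 W < 1) {θ : ℝ}
    (hθ : θ = 1 / (1 + √(1 - sigma2 W ^ 2))) (m : ℕ) {κ : Type*} [Fintype κ]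
    {x : Fin N → EuclideanSpace ℝ κ} (hx : ∑ v, x v = 0) (u : Fin N) :
    ‖∑ v, accelPoly θ W (m + 1) u v • x v‖ ^ 2 ≤ 4 * θ ^ m * ∑ v, ‖x v‖ ^ 2 := by
  set P := accelPoly θ W (m + 1)
  have hcol : ∀ i, ∑ v, x v i = 0 := fun i => by
    simpa using congrArg (fun z : EuclideanSpace ℝ κ => z i) hx
  calc ‖∑ v, P u v • x v‖ ^ 2 = ∑ i, (P *ᵥ fun v => x v i) u ^ 2 := by
        simp [EuclideanSpace.norm_sq_eq, mulVec, dotProduct]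
    _ ≤ ∑ i, (P *ᵥ fun v => x v i) ⬝ᵥ (P *ᵥ fun v => x v i) := by
        refine sum_le_sum fun i _ => ?_
        rw [sq, dotProduct]
        exact single_le_sum (f := fun u => _ * _) (fun _ _ => mul_self_nonneg _) (mem_univ u)
    _ ≤ ∑ i, 4 * θ ^ m * ((fun v => x v i) ⬝ᵥ fun v => x v i) := sum_le_sum fun i _ =>
        dotProduct_accelPoly_mulVec_le hWpsd hWrow hWcol hσ0 hσ1 hθ m (hcol i)
    _ = 4 * θ ^ m * ∑ v, ‖x v‖ ^ 2 := by
        rw [← mul_sum]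
        simp only [EuclideanSpace.norm_sq_eq, Real.norm_eq_abs, sq_abs]
        simp only [dotProduct, sq]
        exact congrArg _ sum_comm

theorem norm_sum_accelPoly_smul_sub_mean_le {N : ℕ} {W : Matrix (Fin N) (Fin N) ℝ}
    (hWpsd : W.PosSemidef) (hWrow : ∀ i, ∑ j, W i j = 1) (hWcol : ∀ j, ∑ i, W i j = 1)
    (hσ0 : 0 ≤ sigma2 W) (hσ1 : sigma2 W < 1) {θ b : ℝ}
    (hθ : θ = 1 / (1 + √(1 - sigma2 W ^ 2))) (hb : b = 1 - (1 - 1 / √2) * √(1 - sigma2 W))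
    (m : ℕ) {κ : Type*} [Fintype κ] (y : Fin N → EuclideanSpace ℝ κ) (u : Fin N) :
    ‖∑ v, accelPoly θ W (m + 1) u v • (y v - (N : ℝ)⁻¹ • ∑ v', y v')‖
      ≤ 2 * b ^ m * √(∑ v, ‖y v‖ ^ 2) := by
  have hmean : ∑ v, (y v - (N : ℝ)⁻¹ • ∑ v', y v') = 0 := by
    rcases Nat.eq_zero_or_pos N with rfl | hN
    · simp
    · rw [sum_sub_distrib, sum_const, card_univ, Fintype.card_fin, ← Nat.cast_smul_eq_nsmul ℝ,
        smul_smul, mul_inv_cancel₀ (by positivity), one_smul, sub_self]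
  have hθ0 : 0 < θ := hθ ▸ by positivity
  have hθb := momentum_le_rate_sq hσ0 hσ1 hθ hb
  have hvar := sum_norm_sub_mean_sq_le y
  rw [Fintype.card_fin] at hvar
  refine le_of_pow_le_pow_left₀ two_ne_zero (by have := hb ▸ rate_nonneg hσ0; positivity) ?_
  calc _ ≤ 4 * θ ^ m * ∑ v, ‖y v - (N : ℝ)⁻¹ • ∑ v', y v'‖ ^ 2 :=
        norm_sq_sum_accelPoly_smul_le hWpsd hWrow hWcol hσ0 hσ1 hθ m hmean u
    _ ≤ 4 * (b ^ 2) ^ m * ∑ v, ‖y v‖ ^ 2 := by gcongr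
    _ = (2 * b ^ m * √(∑ v, ‖y v‖ ^ 2)) ^ 2 := by
        rw [mul_pow, mul_pow, Real.sq_sqrt (by positivity), ← pow_mul, ← pow_mul]; ring

theorem eq_sum_accelPoly_mul_of_recurrence {ι κ α : Type*} [Fintype ι] [DecidableEq ι]
    {W : Matrix ι ι ℝ} {θ : ℝ} {B : ℕ} {x : ℕ → Matrix ι κ ℝ}
    (hrec : ∀ j < B, x (j + 2) = (1 + θ) • (W * x (j + 1)) - θ • x j)
    {t : Finset α} {m : α → ℕ} {Y : α → Matrix ι κ ℝ}
    (h0 : x 0 = ∑ l ∈ t, accelPoly θ W (m l) * Y l)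
    (h1 : x 1 = ∑ l ∈ t, accelPoly θ W (m l + 1) * Y l) :
    ∀ j ≤ B + 1, x j = ∑ l ∈ t, accelPoly θ W (m l + j) * Y l
  | 0, _ => h0
  | 1, _ => h1
  | j + 2, hj => by
    rw [hrec j (by omega), eq_sum_accelPoly_mul_of_recurrence hrec h0 h1 (j + 1) (by omega),
      eq_sum_accelPoly_mul_of_recurrence hrec h0 h1 j (by omega), Matrix.mul_sum, smul_sum,
      smul_sum, ← sum_sub_distrib]
    refine sum_congr rfl fun l _ => ?_
    rw [show m l + (j + 2) = m l + j + 2 from rfl, accelPoly, Matrix.sub_mul, Matrix.smul_mul,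
      Matrix.smul_mul, Matrix.mul_assoc]
    rfl

theorem gossip_blocks_eq_sum {ι κ : Type*} [Fintype ι] [DecidableEq ι]
    {W : Matrix ι ι ℝ} {θ : ℝ} {B S : ℕ} {Z : ℕ → ℤ → Matrix ι κ ℝ} {Y : ℕ → Matrix ι κ ℝ}
    (hZ1 : Z 1 (-1) = 0 ∧ Z 1 0 = 0)
    (hrec : ∀ s ∈ Icc 1 S, ∀ k ∈ Ico (0 : ℤ) B,
      Z s (k + 1) = (1 + θ) • (W * Z s k) - θ • Z s (k - 1))
    (hnext : ∀ s ∈ Icc 1 (S - 1), Z (s + 1) (-1) = Z s (B - 1) + Y s ∧ Z (s + 1) 0 = Z s B + Y s) :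
    ∀ t, t + 1 ≤ S → ∀ j ≤ B + 1,
      Z (t + 1) (j - 1) = ∑ l ∈ Icc 1 t, accelPoly θ W ((t - l) * B + j) * Y l := by
  have hblock : ∀ t, t + 1 ≤ S →
      Z (t + 1) (-1) = ∑ l ∈ Icc 1 t, accelPoly θ W ((t - l) * B) * Y l →
      Z (t + 1) 0 = ∑ l ∈ Icc 1 t, accelPoly θ W ((t - l) * B + 1) * Y l →
      ∀ j ≤ B + 1, Z (t + 1) (j - 1) = ∑ l ∈ Icc 1 t, accelPoly θ W ((t - l) * B + j) * Y l := by
    intro t ht h0 h1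
    refine eq_sum_accelPoly_mul_of_recurrence (fun j hj => ?_) h0 h1
    have := hrec (t + 1) (mem_Icc.2 ⟨by omega, ht⟩) j (mem_Ico.2 ⟨by omega, by omega⟩)
    rwa [show ((j + 2 : ℕ) : ℤ) - 1 = j + 1 by push_cast; ring,
      show ((j + 1 : ℕ) : ℤ) - 1 = j by push_cast; ring]
  have hshift : ∀ t (i : ℕ), ∑ l ∈ Icc 1 (t + 1), accelPoly θ W ((t + 1 - l) * B + i) * Y l
      = ∑ l ∈ Icc 1 t, accelPoly θ W ((t - l) * B + (B + i)) * Y l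
        + accelPoly θ W i * Y (t + 1) := by
    intro t i
    rw [sum_Icc_succ_top (by omega), Nat.sub_self, zero_mul, zero_add]
    congr 1
    refine sum_congr rfl fun l hl => ?_
    rw [show t + 1 - l = t - l + 1 by have := mem_Icc.1 hl; omega, add_one_mul, add_assoc]
  intro t
  induction t with
  | zero =>
    intro ht
    exact hblock 0 ht (by simp [hZ1.1]) (by simp [hZ1.2])
  | succ t ih =>
    intro ht
    have hmem : t + 1 ∈ Icc 1 (S - 1) := mem_Icc.2 ⟨by omega, by omega⟩
    refine hblock (t + 1) ht ?_ ?_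
    · have hprev := ih (by omega) B (by omega)
      have h := hshift t 0
      simp only [add_zero, accelPoly, Matrix.one_mul] at h
      rw [(hnext (t + 1) hmem).1, hprev, h]
    · have hprev := ih (by omega) (B + 1) le_rfl
      have h := hshift t 1
      simp only [accelPoly, Matrix.one_mul] at h
      rw [(hnext (t + 1) hmem).2, h, ← hprev, Nat.cast_succ, add_sub_cancel_right]

theorem gossip_apply_eq_sum {n N B S : ℕ} {W : Matrix (Fin N) (Fin N) ℝ} {θ : ℝ}
    {y : ℕ → Fin N → EuclideanSpace ℝ (Fin n)} {z : ℕ → ℤ → Fin N → EuclideanSpace ℝ (Fin n)}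
    (hz1 : ∀ u, z 1 (-1) u = 0 ∧ z 1 0 u = 0)
    (hzRec : ∀ s ∈ Icc 1 S, ∀ k ∈ Ico (0 : ℤ) (B : ℤ), ∀ u,
      z s (k + 1) u = (1 + θ) • (∑ v, W u v • z s k v) - θ • z s (k - 1) u)
    (hzNext : ∀ s ∈ Icc 1 (S - 1), ∀ u,
      z (s + 1) (-1) u = z s ((B : ℤ) - 1) u + y s u ∧ z (s + 1) 0 u = z s (B : ℤ) u + y s u) :
    ∀ s ∈ Icc 1 S, ∀ u, z s B u
      = ∑ l ∈ Icc 1 (s - 1), ∑ v, accelPoly θ W ((s - l - 1) * B + B + 1) u v • y l v := by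
  set Z : ℕ → ℤ → Matrix (Fin N) (Fin n) ℝ := fun s k => Matrix.of fun u i => z s k u i
  set Y : ℕ → Matrix (Fin N) (Fin n) ℝ := fun l => Matrix.of fun v i => y l v i
  have hZ1 : Z 1 (-1) = 0 ∧ Z 1 0 = 0 := by
    constructor <;> ext u i <;> simp [Z, hz1]
  have hrec : ∀ s ∈ Icc 1 S, ∀ k ∈ Ico (0 : ℤ) B,
      Z s (k + 1) = (1 + θ) • (W * Z s k) - θ • Z s (k - 1) := by
    intro s hs k hk
    ext u i
    simp [Z, hzRec s hs k hk u, Matrix.mul_apply]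
  have hnext : ∀ s ∈ Icc 1 (S - 1),
      Z (s + 1) (-1) = Z s (B - 1) + Y s ∧ Z (s + 1) 0 = Z s B + Y s := by
    intro s hs
    constructor <;> ext u i <;> simp [Z, Y, hzNext s hs u]
  intro s hs u
  obtain ⟨t, rfl⟩ : ∃ t, s = t + 1 := ⟨s - 1, by have := mem_Icc.1 hs; omega⟩
  have h := gossip_blocks_eq_sum hZ1 hrec hnext t (mem_Icc.1 hs).2 (B + 1) le_rfl
  ext i
  have := congrFun (congrFun h u) i
  simp only [Nat.cast_add, Nat.cast_one, add_sub_cancel_right, of_apply, Matrix.sum_apply,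
    Matrix.mul_apply, Z, Y] at this
  rw [this, Nat.add_sub_cancel]
  simp only [WithLp.ofLp_sum, Finset.sum_apply, WithLp.ofLp_smul, Pi.smul_apply, smul_eq_mul]
  refine sum_congr rfl fun l _ => ?_
  rw [show t + 1 - l - 1 = t - l by omega, add_assoc]

theorem stmt_11_general (n N B S : ℕ) (hN : 1 ≤ N)
    (W : Matrix (Fin N) (Fin N) ℝ)
    (hWrow : ∀ i, ∑ j, W i j = 1) (hWcol : ∀ j, ∑ i, W i j = 1)
    (hWpsd : W.PosSemidef)
    (hσ0 : 0 ≤ sigma2 W) (hσ1 : sigma2 W < 1)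
    (θ b : ℝ)
    (hθ : θ = 1 / (1 + Real.sqrt (1 - sigma2 W ^ 2)))
    (hb : b = 1 - (1 - 1 / Real.sqrt 2) * Real.sqrt (1 - sigma2 W))
    (hB : B = ⌈Real.sqrt 2 * Real.log (N * Real.sqrt (14 * N)) /
        ((Real.sqrt 2 - 1) * Real.sqrt (1 - sigma2 W))⌉₊)
    (y : ℕ → Fin N → EuclideanSpace ℝ (Fin n))
    (z : ℕ → ℤ → Fin N → EuclideanSpace ℝ (Fin n))
    (hz1 : ∀ u, z 1 (-1) u = 0 ∧ z 1 0 u = 0)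
    (hzRec : ∀ s ∈ Finset.Icc 1 S, ∀ k ∈ Finset.Ico (0 : ℤ) (B : ℤ), ∀ u,
      z s (k + 1) u = (1 + θ) • (∑ v, W u v • z s k v) - θ • z s (k - 1) u)
    (hzNext : ∀ s ∈ Finset.Icc 1 (S - 1), ∀ u,
      z (s + 1) (-1) u = z s ((B : ℤ) - 1) u + y s u ∧
        z (s + 1) 0 u = z s (B : ℤ) u + y s u) :
    ∀ u : Fin N, ∀ s ∈ Finset.Icc 1 S,
      ‖z s (B : ℤ) u - (N : ℝ)⁻¹ • ∑ l ∈ Finset.Icc 1 (s - 1), ∑ v, y l v‖ ≤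
        2 / (N * Real.sqrt N) *
          ∑ l ∈ Finset.Icc 1 (s - 1),
            b ^ ((s - l - 1) * B) * Real.sqrt (∑ v, ‖y l v‖ ^ 2) := by
  intro u s hs
  have hbB := rate_pow_le_inv hN hσ0 hσ1 hb hB
  have hb0 := hb ▸ rate_nonneg hσ0
  rw [gossip_apply_eq_sum hz1 hzRec hzNext s hs u, smul_sum, ← sum_sub_distrib, mul_sum]
  refine (norm_sum_le _ _).trans (sum_le_sum fun l _ => ?_)
  rw [← sum_accelPoly_smul_sub hWrow]
  calc _ ≤ 2 * b ^ ((s - l - 1) * B + B) * √(∑ v, ‖y l v‖ ^ 2) :=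
        norm_sum_accelPoly_smul_sub_mean_le hWpsd hWrow hWcol hσ0 hσ1 hθ hb _ (y l) u
    _ ≤ 2 * (b ^ ((s - l - 1) * B) * ((N : ℝ) * √N)⁻¹) * √(∑ v, ‖y l v‖ ^ 2) := by
        rw [pow_add]; gcongr
    _ = _ := by ring

/-- deviation of the block gossip iterate `z_s^B(u)` from the
running average of the increments. -/
theorem stmt_11 (n N B S : ℕ) (hN : 1 ≤ N) (hS : 1 ≤ S)
    (W : Matrix (Fin N) (Fin N) ℝ)
    (hWsymm : W.IsSymm) (hWnonneg : ∀ i j, 0 ≤ W i j)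
    (hWrow : ∀ i, ∑ j, W i j = 1) (hWcol : ∀ j, ∑ i, W i j = 1)
    (hWpsd : W.PosSemidef)
    (hσ0 : 0 ≤ sigma2 W) (hσ1 : sigma2 W < 1)
    (θ b : ℝ)
    (hθ : θ = 1 / (1 + Real.sqrt (1 - sigma2 W ^ 2)))
    (hb : b = 1 - (1 - 1 / Real.sqrt 2) * Real.sqrt (1 - sigma2 W))
    (hB : B = ⌈Real.sqrt 2 * Real.log (N * Real.sqrt (14 * N)) /
        ((Real.sqrt 2 - 1) * Real.sqrt (1 - sigma2 W))⌉₊)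
    (y : ℕ → Fin N → EuclideanSpace ℝ (Fin n))
    (z : ℕ → ℤ → Fin N → EuclideanSpace ℝ (Fin n))
    (hz1 : ∀ u, z 1 (-1) u = 0 ∧ z 1 0 u = 0)
    (hzRec : ∀ s ∈ Finset.Icc 1 S, ∀ k ∈ Finset.Ico (0 : ℤ) (B : ℤ), ∀ u,
      z s (k + 1) u = (1 + θ) • (∑ v, W u v • z s k v) - θ • z s (k - 1) u)
    (hzNext : ∀ s ∈ Finset.Icc 1 (S - 1), ∀ u,
      z (s + 1) (-1) u = z s ((B : ℤ) - 1) u + y s u ∧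
        z (s + 1) 0 u = z s (B : ℤ) u + y s u) :
    ∀ u : Fin N, ∀ s ∈ Finset.Icc 1 S,
      ‖z s (B : ℤ) u - (N : ℝ)⁻¹ • ∑ l ∈ Finset.Icc 1 (s - 1), ∑ v, y l v‖ ≤
        2 / (N * Real.sqrt N) *
          ∑ l ∈ Finset.Icc 1 (s - 1),
            b ^ ((s - l - 1) * B) * Real.sqrt (∑ v, ‖y l v‖ ^ 2) :=
  stmt_11_general n N B S hN W hWrow hWcol hWpsd hσ0 hσ1 θ b hθ hb hB y z hz1 hzRec hzNext
end

section
/- Let X ⊆ ℝ^n be nonempty, closed, convex, with 0 ∈ X and diameter at most D (i.e. ‖x − y‖₂ ≤ D for all x, y ∈ X, hence ‖x‖₂ ≤ D for all x ∈ X). Let z ∈ ℝ^n and η_a, η_b > 0, and let x_a = argmin_{x∈X} {⟨z, x⟩ + (1/η_a)‖x‖₂²} and x_b = argmin_{x∈X} {⟨z, x⟩ + (1/η_b)‖x‖₂²}. Then ‖x_a − x_b‖₂ ≤ 2·D·|η_a − η_b|/(η_a + η_b). -/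
open scoped RealInnerProductSpace

/-- Variational inequality for a point minimizing distance to `u` over a convex set. -/
lemma stmt_14_vi {E : Type*} [NormedAddCommGroup E] [InnerProductSpace ℝ E]
    {X : Set E} (hXconv : Convex ℝ X) {u x : E} (hx : x ∈ X)
    (hmin : ∀ p ∈ X, ‖u - x‖ ≤ ‖u - p‖) : ∀ p ∈ X, ⟪u - x, p - x⟫ ≤ 0 := by
  haveI : Nonempty X := ⟨⟨x, hx⟩⟩
  rw [← norm_eq_iInf_iff_real_inner_le_zero hXconv hx]
  refine le_antisymm (le_ciInf fun w => hmin w w.2) ?_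
  have hbdd : BddBelow (Set.range fun w : X => ‖u - w‖) :=
    ⟨0, fun r ⟨w, h⟩ => h ▸ norm_nonneg _⟩
  exact ciInf_le hbdd ⟨x, hx⟩

/-- stability of the FTRL iterate with respect to the learning rate. -/
theorem stmt_14 (n : ℕ) (X : Set (EuclideanSpace ℝ (Fin n))) (D : ℝ)
    (hXne : X.Nonempty) (hXclosed : IsClosed X) (hXconv : Convex ℝ X)
    (hX0 : (0 : EuclideanSpace ℝ (Fin n)) ∈ X)
    (hD : ∀ x ∈ X, ∀ y ∈ X, ‖x - y‖ ≤ D)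
    (z : EuclideanSpace ℝ (Fin n)) (ηa ηb : ℝ) (hηa : 0 < ηa) (hηb : 0 < ηb)
    (xa xb : EuclideanSpace ℝ (Fin n))
    (hxaX : xa ∈ X)
    (hxa : ∀ p ∈ X, ⟪z, xa⟫ + (1 / ηa) * ‖xa‖ ^ 2 ≤ ⟪z, p⟫ + (1 / ηa) * ‖p‖ ^ 2)
    (hxbX : xb ∈ X)
    (hxb : ∀ p ∈ X, ⟪z, xb⟫ + (1 / ηb) * ‖xb‖ ^ 2 ≤ ⟪z, p⟫ + (1 / ηb) * ‖p‖ ^ 2) :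
    ‖xa - xb‖ ≤ 2 * D * |ηa - ηb| / (ηa + ηb) := by
  -- general reduction: the minimizer of the FTRL objective is the projection of -(η/2)•z
  have key : ∀ (η : ℝ), 0 < η → ∀ (x : EuclideanSpace ℝ (Fin n)), x ∈ X →
      (∀ p ∈ X, ⟪z, x⟫ + (1 / η) * ‖x‖ ^ 2 ≤ ⟪z, p⟫ + (1 / η) * ‖p‖ ^ 2) →
      ∀ p ∈ X, ⟪(-(η/2)) • z - x, p - x⟫ ≤ 0 := by
    intro η hη x hxX hmin
    refine stmt_14_vi hXconv hxX ?_
    intro p hp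
    rw [← pow_le_pow_iff_left₀ (norm_nonneg _) (norm_nonneg _) two_ne_zero]
    have sq : ∀ y : EuclideanSpace ℝ (Fin n),
        ‖(-(η/2)) • z - y‖ ^ 2 = ‖(-(η/2)) • z‖ ^ 2 + η * (⟪z, y⟫ + (1/η) * ‖y‖ ^ 2) := by
      intro y
      rw [norm_sub_sq_real, real_inner_smul_left]
      field_simp
      ring
    rw [sq x, sq p]
    have := hmin p hp
    nlinarith
  have h1 := key ηa hηa xa hxaX hxa xb hxbX
  have h2 := key ηb hηb xb hxbX hxb xa hxaX
  -- expand inner products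
  set d := xb - xa with hd
  set A := ⟪xa, d⟫ with hA
  set B := ⟪xb, d⟫ with hB
  set N := ‖d‖ with hN
  have h1e : -(ηa/2) * ⟪z, d⟫ - A ≤ 0 := by
    have := h1
    rwa [inner_sub_left, real_inner_smul_left] at this
  have h2e : (ηb/2) * ⟪z, d⟫ + B ≤ 0 := by
    have h2' : ⟪(-(ηb/2)) • z - xb, -d⟫ ≤ 0 := by
      rw [hd, neg_sub]; exact h2
    rw [inner_neg_right, inner_sub_left, real_inner_smul_left] at h2'
    linarith
  have hBA : B - A = N ^ 2 := by
    rw [hA, hB, ← inner_sub_left, ← hd, real_inner_self_eq_norm_sq, hN]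
  -- B * ηa ≤ A * ηb
  have hkey : B * ηa ≤ A * ηb := by
    nlinarith [mul_le_mul_of_nonneg_left h1e hηb.le, mul_le_mul_of_nonneg_left h2e hηa.le]
  -- bound |A + B|
  have hnormxa : ‖xa‖ ≤ D := by simpa using hD xa hxaX 0 hX0
  have hnormxb : ‖xb‖ ≤ D := by simpa using hD xb hxbX 0 hX0
  have hDpos : 0 ≤ D := le_trans (norm_nonneg _) hnormxa
  have hAB : |A + B| ≤ 2 * D * N := by
    have : A + B = ⟪xa + xb, d⟫ := (inner_add_left _ _ _).symm
    rw [this]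
    calc |⟪xa + xb, d⟫| ≤ ‖xa + xb‖ * ‖d‖ := abs_real_inner_le_norm _ _
      _ ≤ (2 * D) * N := by
          refine mul_le_mul ?_ le_rfl (norm_nonneg _) (by positivity)
          calc ‖xa + xb‖ ≤ ‖xa‖ + ‖xb‖ := norm_add_le _ _
            _ ≤ 2 * D := by linarith
  -- main inequality: N^2 * (ηa + ηb) ≤ 2 * D * N * |ηa - ηb|
  have hmain : N ^ 2 * (ηa + ηb) ≤ 2 * D * N * |ηa - ηb| := by
    have h3 : N ^ 2 * (ηa + ηb) ≤ (A + B) * (ηb - ηa) := by nlinarith [hBA, hkey]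
    calc N ^ 2 * (ηa + ηb) ≤ (A + B) * (ηb - ηa) := h3
      _ ≤ |A + B| * |ηb - ηa| := by
          calc (A + B) * (ηb - ηa) ≤ |(A + B) * (ηb - ηa)| := le_abs_self _
            _ = |A + B| * |ηb - ηa| := abs_mul _ _
      _ = |A + B| * |ηa - ηb| := by rw [abs_sub_comm]
      _ ≤ 2 * D * N * |ηa - ηb| := by
          exact mul_le_mul_of_nonneg_right hAB (abs_nonneg _)
  have hNab : ‖xa - xb‖ = N := by rw [hN, hd, norm_sub_rev]
  rw [hNab, le_div_iff₀ (by linarith)]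
  rcases eq_or_lt_of_le (norm_nonneg d) with h0 | h0
  · have hN0 : N = 0 := by rw [hN, ← h0]
    rw [hN0, zero_mul]
    positivity
  · rw [← hN] at h0
    nlinarith [hmain, h0]
end

section
/- Let X ⊆ ℝ^n be nonempty, compact, convex, with 0 ∈ X and diameter at most D. Let S ≥ 1, let g_1, …, g_S ∈ ℝ^n with ‖g_s‖₂ ≤ G for all s, and let η_1, …, η_{S+1} > 0 be arbitrary positive reals (not necessarily monotone). Define the FTRL iterates x̃_s = argmin_{x∈X} {⟨Σ_{l=1}^{s−1} g_l, x⟩ + (1/η_s)‖x‖₂²} for s = 1, …, S+1. Then for every x* ∈ X: Σ_{s=1}^S ⟨g_s, x̃_s − x*⟩ ≤ D²/η_{S+1} + (G²/2)·Σ_{s=1}^S η_s + Σ_{s=1}^S (1/η_s − 1/η_{s+1})·‖x̃_{s+1}‖₂². -/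
open Finset
open scoped RealInnerProductSpace

/-!
Let Φ_s(x) = ⟪∑_{l<s} g_l, x⟫ + ‖x‖²/η_s, minimised over X at x̃_s. Comparing Φ_s at x̃_s with
its value at the midpoint of x̃_s and x̃_{s+1}, which lies in X, gives the strong-convexity margin
Φ_s(x̃_s) + ‖x̃_s − x̃_{s+1}‖²/(2η_s) ≤ Φ_s(x̃_{s+1}); Young's inequality bounds
⟪g_s, x̃_s − x̃_{s+1}⟫ by η_s G²/2 plus that margin. As
Φ_{s+1} = Φ_s + ⟪g_s, ·⟫ + (1/η_{s+1} − 1/η_s)‖·‖², this gives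
⟪g_s, x̃_s⟫ ≤ η_s G²/2 + (1/η_s − 1/η_{s+1})‖x̃_{s+1}‖² + Φ_{s+1}(x̃_{s+1}) − Φ_s(x̃_s).
Summed over s, the Φ-terms telescope; finally Φ_1(x̃_1) ≥ 0 and
Φ_{S+1}(x̃_{S+1}) ≤ Φ_{S+1}(x*) ≤ ⟪∑_{s≤S} g_s, x*⟫ + D²/η_{S+1} because ‖x*‖ = ‖x* − 0‖ ≤ D.
-/

section

variable {E : Type*} [SeminormedAddCommGroup E] [InnerProductSpace ℝ E]

def ftrlObjective (v : E) (c : ℝ) (x : E) : ℝ := ⟪v, x⟫ + c * ‖x‖ ^ 2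

lemma ftrlObjective_add_inner (v g x : E) (c c' : ℝ) :
    ftrlObjective v c x + ⟪g, x⟫ = ftrlObjective (v + g) c' x + (c - c') * ‖x‖ ^ 2 := by
  simp only [ftrlObjective, inner_add_left]
  ring

lemma ftrlObjective_midpoint (v a b : E) (c : ℝ) :
    ftrlObjective v c ((1 / 2 : ℝ) • a + (1 / 2 : ℝ) • b) =
      (ftrlObjective v c a + ftrlObjective v c b) / 2 - c / 4 * ‖a - b‖ ^ 2 := by
  simp only [ftrlObjective, ← smul_add, real_inner_smul_right, norm_smul, mul_pow,
    norm_add_sq_real, norm_sub_sq_real, inner_add_right]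
  norm_num
  ring

lemma ftrlObjective_add_sq_le_of_isMinOn {X : Set E} (hX : Convex ℝ X) {v a b : E} {c : ℝ}
    (hmin : IsMinOn (ftrlObjective v c) X a) (ha : a ∈ X) (hb : b ∈ X) :
    ftrlObjective v c a + c / 2 * ‖a - b‖ ^ 2 ≤ ftrlObjective v c b := by
  have hmid := isMinOn_iff.mp hmin _
    (hX ha hb (by norm_num : (0 : ℝ) ≤ 1 / 2) (by norm_num : (0 : ℝ) ≤ 1 / 2) (by norm_num))
  rw [ftrlObjective_midpoint] at hmid
  linarith

lemma real_inner_le_young {g d : E} {G η : ℝ} (hg : ‖g‖ ≤ G) (hη : 0 < η) :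
    ⟪g, d⟫ ≤ η / 2 * G ^ 2 + 1 / η / 2 * ‖d‖ ^ 2 := by
  calc ⟪g, d⟫ ≤ G * ‖d‖ :=
        (real_inner_le_norm g d).trans (mul_le_mul_of_nonneg_right hg (norm_nonneg d))
    _ ≤ η / 2 * G ^ 2 + 1 / η / 2 * ‖d‖ ^ 2 := by
        have := two_mul_le_add_sq (η * G) ‖d‖
        field_simp
        linarith

lemma real_inner_le_of_isMinOn_ftrlObjective {X : Set E} (hX : Convex ℝ X) {v g a b : E}
    {G η η' : ℝ} (hg : ‖g‖ ≤ G) (hη : 0 < η) (hmin : IsMinOn (ftrlObjective v (1 / η)) X a)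
    (ha : a ∈ X) (hb : b ∈ X) :
    ⟪g, a⟫ ≤ G ^ 2 / 2 * η + (1 / η - 1 / η') * ‖b‖ ^ 2 +
      (ftrlObjective (v + g) (1 / η') b - ftrlObjective v (1 / η) a) := by
  have hconv := ftrlObjective_add_sq_le_of_isMinOn hX hmin ha hb
  have hyoung := real_inner_le_young (d := a - b) hg hη
  have hshift := ftrlObjective_add_inner v g b (1 / η) (1 / η')
  rw [inner_sub_right] at hyoung
  linarith

end

lemma Finset.sum_Icc_sub_one_add {M : Type*} [AddCommMonoid M] (f : ℕ → M) {s : ℕ}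
    (hs : 1 ≤ s) : ∑ l ∈ Icc 1 (s - 1), f l + f s = ∑ l ∈ Icc 1 s, f l := by
  obtain ⟨t, rfl⟩ : ∃ t, s = t + 1 := ⟨s - 1, by omega⟩
  rw [Nat.add_sub_cancel, sum_Icc_succ_top (Nat.le_add_left 1 t)]

lemma Finset.sum_Icc_le_add_sub_of_le {M : Type*} [AddCommGroup M] [PartialOrder M]
    [IsOrderedAddMonoid M] {r b A : ℕ → M} {m S : ℕ} (hmS : m ≤ S + 1)
    (h : ∀ s ∈ Icc m S, r s ≤ b s + (A (s + 1) - A s)) :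
    ∑ s ∈ Icc m S, r s ≤ ∑ s ∈ Icc m S, b s + (A (S + 1) - A m) := by
  have htel : ∑ s ∈ Icc m S, (A (s + 1) - A s) = A (S + 1) - A m := by
    rw [← Ico_add_one_right_eq_Icc, sum_Ico_sub A hmS]
  rw [← htel, ← sum_add_distrib]
  exact sum_le_sum h

theorem stmt_18_general (n S : ℕ)
    (X : Set (EuclideanSpace ℝ (Fin n))) (D G : ℝ)
    (hXconv : Convex ℝ X)
    (hX0 : (0 : EuclideanSpace ℝ (Fin n)) ∈ X)
    (hD : ∀ x ∈ X, ∀ y ∈ X, ‖x - y‖ ≤ D)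
    (g : ℕ → EuclideanSpace ℝ (Fin n)) (hg : ∀ s ∈ Finset.Icc 1 S, ‖g s‖ ≤ G)
    (η : ℕ → ℝ) (hη : ∀ s ∈ Finset.Icc 1 (S + 1), 0 < η s)
    (xt : ℕ → EuclideanSpace ℝ (Fin n))
    (hxtX : ∀ s ∈ Finset.Icc 1 (S + 1), xt s ∈ X)
    (hxt : ∀ s ∈ Finset.Icc 1 (S + 1), ∀ p ∈ X,
      ⟪∑ l ∈ Finset.Icc 1 (s - 1), g l, xt s⟫ + (1 / η s) * ‖xt s‖ ^ 2 ≤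
        ⟪∑ l ∈ Finset.Icc 1 (s - 1), g l, p⟫ + (1 / η s) * ‖p‖ ^ 2) :
    ∀ xstar ∈ X,
      ∑ s ∈ Finset.Icc 1 S, ⟪g s, xt s - xstar⟫ ≤
        D ^ 2 / η (S + 1) + (G ^ 2 / 2) * ∑ s ∈ Finset.Icc 1 S, η s +
          ∑ s ∈ Finset.Icc 1 S, (1 / η s - 1 / η (s + 1)) * ‖xt (s + 1)‖ ^ 2 := by
  intro xstar hstar
  set Φ : ℕ → EuclideanSpace ℝ (Fin n) → ℝ :=
    fun s => ftrlObjective (∑ l ∈ Icc 1 (s - 1), g l) (1 / η s)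
  have hmin : ∀ s ∈ Icc 1 (S + 1), IsMinOn (Φ s) X (xt s) :=
    fun s hs => isMinOn_iff.mpr (hxt s hs)
  have hstep : ∀ s ∈ Icc 1 S, ⟪g s, xt s - xstar⟫ ≤
      (G ^ 2 / 2 * η s + (1 / η s - 1 / η (s + 1)) * ‖xt (s + 1)‖ ^ 2 - ⟪g s, xstar⟫) +
        (Φ (s + 1) (xt (s + 1)) - Φ s (xt s)) := by
    intro s hs
    have hs' : s ∈ Icc 1 (S + 1) := Icc_subset_Icc_right (by omega) hs
    have hs1 : s + 1 ∈ Icc 1 (S + 1) := by simp only [mem_Icc] at hs ⊢; omega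
    have h := real_inner_le_of_isMinOn_ftrlObjective (η' := η (s + 1)) hXconv (hg s hs)
      (hη s hs') (hmin s hs') (hxtX s hs') (hxtX (s + 1) hs1)
    rw [sum_Icc_sub_one_add g (mem_Icc.mp hs).1] at h
    simp only [Φ, Nat.add_sub_cancel, inner_sub_right]
    linarith
  have hlast : Φ (S + 1) (xt (S + 1)) ≤ ⟪∑ l ∈ Icc 1 S, g l, xstar⟫ + D ^ 2 / η (S + 1) := by
    have hS1 : S + 1 ∈ Icc 1 (S + 1) := by simp
    have hxstar : ‖xstar‖ ≤ D := by simpa using hD xstar hstar 0 hX0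
    calc Φ (S + 1) (xt (S + 1)) ≤ Φ (S + 1) xstar := isMinOn_iff.mp (hmin _ hS1) xstar hstar
      _ ≤ ⟪∑ l ∈ Icc 1 S, g l, xstar⟫ + D ^ 2 / η (S + 1) := by
        simp only [Φ, ftrlObjective, Nat.add_sub_cancel, one_div_mul_eq_div]
        have := hη _ hS1
        gcongr
  have hfirst : 0 ≤ Φ 1 (xt 1) := by
    have h1 : 0 < η 1 := hη 1 (by simp)
    simp [Φ, ftrlObjective]
    positivity
  have hsum := sum_Icc_le_add_sub_of_le (A := fun s => Φ s (xt s)) (Nat.le_add_left 1 S) hstep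
  rw [sum_sub_distrib, sum_add_distrib, ← mul_sum, ← sum_inner] at hsum
  linarith

/-- FTRL regret bound with arbitrary (possibly non-monotone)
positive learning rates. -/
theorem stmt_18 (n S : ℕ) (hS : 1 ≤ S)
    (X : Set (EuclideanSpace ℝ (Fin n))) (D G : ℝ)
    (hXne : X.Nonempty) (hXcpt : IsCompact X) (hXconv : Convex ℝ X)
    (hX0 : (0 : EuclideanSpace ℝ (Fin n)) ∈ X)
    (hD : ∀ x ∈ X, ∀ y ∈ X, ‖x - y‖ ≤ D)
    (g : ℕ → EuclideanSpace ℝ (Fin n)) (hg : ∀ s ∈ Finset.Icc 1 S, ‖g s‖ ≤ G)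
    (η : ℕ → ℝ) (hη : ∀ s ∈ Finset.Icc 1 (S + 1), 0 < η s)
    (xt : ℕ → EuclideanSpace ℝ (Fin n))
    (hxtX : ∀ s ∈ Finset.Icc 1 (S + 1), xt s ∈ X)
    (hxt : ∀ s ∈ Finset.Icc 1 (S + 1), ∀ p ∈ X,
      ⟪∑ l ∈ Finset.Icc 1 (s - 1), g l, xt s⟫ + (1 / η s) * ‖xt s‖ ^ 2 ≤
        ⟪∑ l ∈ Finset.Icc 1 (s - 1), g l, p⟫ + (1 / η s) * ‖p‖ ^ 2) :
    ∀ xstar ∈ X,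
      ∑ s ∈ Finset.Icc 1 S, ⟪g s, xt s - xstar⟫ ≤
        D ^ 2 / η (S + 1) + (G ^ 2 / 2) * ∑ s ∈ Finset.Icc 1 S, η s +
          ∑ s ∈ Finset.Icc 1 S, (1 / η s - 1 / η (s + 1)) * ‖xt (s + 1)‖ ^ 2 :=
  stmt_18_general n S X D G hXconv hX0 hD g hg η hη xt hxtX hxt
end

section
/- Let X ⊆ ℝ^n be nonempty, closed, convex, with diameter at most D. Let α > 0, B > 0, L ≥ 0, integers N ≥ 1 and s ≥ 1, points x_l(v) ∈ X for l ∈ {1,…,s} and v ∈ {1,…,N}, and vectors w, g ∈ ℝ^n with ‖g‖₂ ≤ B·L. Define ψ_s(x) = (αB/(2N))·Σ_{l=1}^{s−1} Σ_{v=1}^N ‖x − x_l(v)‖₂² and ψ_{s+1}(x) = (αB/(2N))·Σ_{l=1}^{s} Σ_{v=1}^N ‖x − x_l(v)‖₂², and let x̃_s = argmin_{x∈X} {⟨w, x⟩ + ψ_s(x)} and x̃_{s+1} = argmin_{x∈X} {⟨w + g, x⟩ + ψ_{s+1}(x)}. Then ‖x̃_s − x̃_{s+1}‖₂ ≤ 2L/(α(2s−1))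 + 2D/(2s−1). -/
open Finset
open scoped RealInnerProductSpace

/-! Both objectives are strongly convex on `X`: the `s`-th one with modulus `αB(s-1)`, the
`(s+1)`-st one with modulus `αBs`. Adding the two quadratic-growth inequalities at their
minimizers bounds `αB(2s-1)/2 · ‖x̃_s - x̃_{s+1}‖²` by `h(x̃_s) - h(x̃_{s+1})`, where
`h = ⟪g, ·⟫ + αB/(2N) · ∑_v ‖· - x_s(v)‖²` is the difference of the objectives. Since `X` has
diameter at most `D`, `h` is `(BL + αBD)`-Lipschitz on `X`, and dividing by the distance gives
the claim. -/

open Filter Topology in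
theorem StrongConvexOn.add_sq_norm_sub_le_of_isMinOn {E : Type*} [NormedAddCommGroup E]
    [NormedSpace ℝ E] {s : Set E} {m : ℝ} {f : E → ℝ} {x y : E} (hf : StrongConvexOn s m f)
    (hmin : IsMinOn f s x) (hx : x ∈ s) (hy : y ∈ s) :
    f x + m / 2 * ‖y - x‖ ^ 2 ≤ f y := by
  have hsegment : ∀ t ∈ Set.Ioo (0 : ℝ) 1, f x + (1 - t) * (m / 2 * ‖y - x‖ ^ 2) ≤ f y := by
    rintro t ⟨ht0, ht1⟩
    have hconv := hf.2 hx hy (sub_nonneg.2 ht1.le) ht0.le (sub_add_cancel 1 t)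
    have hle : f x ≤ f ((1 - t) • x + t • y) := hmin (hf.1 hx hy (by linarith) ht0.le (by ring))
    rw [norm_sub_rev] at hconv
    simp only [smul_eq_mul] at hconv
    nlinarith
  have hlim : Tendsto (fun t : ℝ ↦ f x + (1 - t) * (m / 2 * ‖y - x‖ ^ 2)) (𝓝[>] 0)
      (𝓝 (f x + m / 2 * ‖y - x‖ ^ 2)) := by
    refine tendsto_nhdsWithin_of_tendsto_nhds ?_
    have hcont : Continuous fun t : ℝ ↦ f x + (1 - t) * (m / 2 * ‖y - x‖ ^ 2) := by fun_prop
    simpa using hcont.tendsto 0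
  exact le_of_tendsto hlim (eventually_of_mem (Ioo_mem_nhdsGT one_pos) hsegment)

theorem StrongConvexOn.mul_sq_norm_sub_le_sub_of_isMinOn_add {E : Type*} [NormedAddCommGroup E]
    [NormedSpace ℝ E] {s : Set E} {m m' : ℝ} {f h : E → ℝ} {x y : E}
    (hf : StrongConvexOn s m f) (hfh : StrongConvexOn s m' (f + h))
    (hx : IsMinOn f s x) (hy : IsMinOn (f + h) s y) (hxs : x ∈ s) (hys : y ∈ s) :
    (m + m') / 2 * ‖x - y‖ ^ 2 ≤ h x - h y := by
  have hfx := hf.add_sq_norm_sub_le_of_isMinOn hx hxs hys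
  have hfhy := hfh.add_sq_norm_sub_le_of_isMinOn hy hys hxs
  rw [norm_sub_rev] at hfx
  simp only [Pi.add_apply] at hfhy
  linarith

theorem strongConvexOn_inner_add_mul_sum_sq_norm_sub {E ι : Type*} [NormedAddCommGroup E]
    [InnerProductSpace ℝ E] {s : Set E} (hs : Convex ℝ s) (w : E) (c : ℝ) (S : Finset ι)
    (a : ι → E) :
    StrongConvexOn s (2 * c * #S) (fun p ↦ ⟪w, p⟫ + c * ∑ i ∈ S, ‖p - a i‖ ^ 2) := by
  rw [strongConvexOn_iff_convex]
  refine (((innerₛₗ ℝ (w - (2 * c) • ∑ i ∈ S, a i)).convexOn hs).add_const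
    (c * ∑ i ∈ S, ‖a i‖ ^ 2)).congr fun p _ ↦ ?_
  simp only [Pi.add_apply, innerₛₗ_apply_apply, real_inner_comm p, inner_sub_right,
    real_inner_smul_right, inner_sum, norm_sub_sq_real, sum_add_distrib, sum_sub_distrib,
    sum_const, nsmul_eq_mul, ← mul_sum]
  ring

theorem sq_norm_sub_sub_sq_norm_sub_le {E : Type*} [SeminormedAddCommGroup E] {x y a : E}
    {D : ℝ} (hx : ‖x - a‖ ≤ D) (hy : ‖y - a‖ ≤ D) :
    ‖x - a‖ ^ 2 - ‖y - a‖ ^ 2 ≤ 2 * D * ‖x - y‖ := by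
  have h : ‖x - a‖ - ‖y - a‖ ≤ ‖x - y‖ := by
    simpa using norm_sub_norm_le (x - a) (y - a)
  nlinarith [norm_nonneg (x - a), norm_nonneg (y - a), norm_nonneg (x - y)]

theorem inner_add_mul_sum_sq_norm_sub_sub_le {E ι : Type*} [NormedAddCommGroup E]
    [InnerProductSpace ℝ E] {g x y : E} {c D : ℝ} {S : Finset ι} {a : ι → E} (hc : 0 ≤ c)
    (hx : ∀ i ∈ S, ‖x - a i‖ ≤ D) (hy : ∀ i ∈ S, ‖y - a i‖ ≤ D) :
    (⟪g, x⟫ + c * ∑ i ∈ S, ‖x - a i‖ ^ 2) - (⟪g, y⟫ + c * ∑ i ∈ S, ‖y - a i‖ ^ 2) ≤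
      (‖g‖ + c * #S * (2 * D)) * ‖x - y‖ := by
  have hlinear : ⟪g, x⟫ - ⟪g, y⟫ ≤ ‖g‖ * ‖x - y‖ := by
    rw [← inner_sub_right]
    exact real_inner_le_norm g _
  have hquad : ∑ i ∈ S, (‖x - a i‖ ^ 2 - ‖y - a i‖ ^ 2) ≤ #S * (2 * D * ‖x - y‖) := by
    simpa using sum_le_sum fun i hi ↦ sq_norm_sub_sub_sq_norm_sub_le (hx i hi) (hy i hi)
  rw [sum_sub_distrib] at hquad
  nlinarith [mul_le_mul_of_nonneg_left hquad hc]

theorem le_div_of_mul_sq_le_mul {a b d : ℝ} (ha : 0 < a) (hb : 0 ≤ b) (hd : 0 ≤ d)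
    (h : a * d ^ 2 ≤ b * d) : d ≤ b / a := by
  rw [le_div_iff₀ ha]
  rcases hd.eq_or_lt with rfl | hd
  · simpa using hb
  · nlinarith

theorem stmt_19_general (n N s : ℕ) (hN : 1 ≤ N) (hs : 1 ≤ s)
    (X : Set (EuclideanSpace ℝ (Fin n))) (D α B L : ℝ)
    (hXconv : Convex ℝ X)
    (hD : ∀ x ∈ X, ∀ y ∈ X, ‖x - y‖ ≤ D)
    (hα : 0 < α) (hB : 0 < B) (hL : 0 ≤ L)
    (xl : ℕ → Fin N → EuclideanSpace ℝ (Fin n))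
    (hxl : ∀ l ∈ Finset.Icc 1 s, ∀ v, xl l v ∈ X)
    (w g : EuclideanSpace ℝ (Fin n)) (hg : ‖g‖ ≤ B * L)
    (xs xs1 : EuclideanSpace ℝ (Fin n))
    (hxsX : xs ∈ X)
    (hxs : ∀ p ∈ X,
      ⟪w, xs⟫ + α * B / (2 * N) * ∑ l ∈ Finset.Icc 1 (s - 1), ∑ v, ‖xs - xl l v‖ ^ 2 ≤
        ⟪w, p⟫ + α * B / (2 * N) * ∑ l ∈ Finset.Icc 1 (s - 1), ∑ v, ‖p - xl l v‖ ^ 2)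
    (hxs1X : xs1 ∈ X)
    (hxs1 : ∀ p ∈ X,
      ⟪w + g, xs1⟫ + α * B / (2 * N) * ∑ l ∈ Finset.Icc 1 s, ∑ v, ‖xs1 - xl l v‖ ^ 2 ≤
        ⟪w + g, p⟫ + α * B / (2 * N) * ∑ l ∈ Finset.Icc 1 s, ∑ v, ‖p - xl l v‖ ^ 2) :
    ‖xs - xs1‖ ≤ 2 * L / (α * (2 * s - 1)) + 2 * D / (2 * s - 1) := by
  obtain ⟨t, rfl⟩ : ∃ t, s = t + 1 := ⟨s - 1, (Nat.sub_add_cancel hs).symm⟩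
  set c := α * B / (2 * N)
  have hcN : c * N = α * B / 2 := by simp only [c]; field_simp
  have hc0 : 0 ≤ c := by positivity
  clear_value c
  let h : EuclideanSpace ℝ (Fin n) → ℝ := fun p ↦ ⟪g, p⟫ + c * ∑ v, ‖p - xl (t + 1) v‖ ^ 2
  have hsplit : (fun p ↦ ⟪w + g, p⟫ + c * ∑ i ∈ Icc 1 (t + 1) ×ˢ univ, ‖p - xl i.1 i.2‖ ^ 2) =
      (fun p ↦ ⟪w, p⟫ + c * ∑ i ∈ Icc 1 t ×ˢ univ, ‖p - xl i.1 i.2‖ ^ 2) + h := by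
    funext p
    simp only [Pi.add_apply, h, sum_product, sum_Icc_succ_top (by omega : 1 ≤ t + 1),
      inner_add_left]
    ring
  simp only [Nat.add_sub_cancel, ← sum_product'] at hxs hxs1
  have hstab := (strongConvexOn_inner_add_mul_sum_sq_norm_sub hXconv w c _ _
    ).mul_sq_norm_sub_le_sub_of_isMinOn_add
    (hsplit ▸ strongConvexOn_inner_add_mul_sum_sq_norm_sub hXconv (w + g) c _ _)
    hxs (hsplit ▸ hxs1) hxsX hxs1X
  simp only [card_product, Nat.card_Icc, card_univ, Fintype.card_fin, Nat.add_sub_cancel,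
    Nat.cast_mul, Nat.cast_add, Nat.cast_one] at hstab
  have hlip : h xs - h xs1 ≤ (B * L + α * B * D) * ‖xs - xs1‖ := by
    have hlast : ∀ v, xl (t + 1) v ∈ X := hxl (t + 1) (by simp)
    refine (inner_add_mul_sum_sq_norm_sub_sub_le hc0
      (fun v _ ↦ hD _ hxsX _ (hlast v)) (fun v _ ↦ hD _ hxs1X _ (hlast v))).trans ?_
    rw [card_univ, Fintype.card_fin, hcN]
    exact mul_le_mul_of_nonneg_right (by linarith) (norm_nonneg _)
  have hD0 : 0 ≤ D := (norm_nonneg _).trans (hD xs hxsX xs hxsX)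
  calc ‖xs - xs1‖ ≤ (B * L + α * B * D) / (α * B * (2 * t + 1) / 2) :=
        le_div_of_mul_sq_le_mul (by positivity) (by positivity) (norm_nonneg _)
          (by linear_combination hstab + hlip - (2 * t + 1) * ‖xs - xs1‖ ^ 2 * hcN)
    _ = 2 * L / (α * (2 * ↑(t + 1) - 1)) + 2 * D / (2 * ↑(t + 1) - 1) := by
        rw [show 2 * ((t + 1 : ℕ) : ℝ) - 1 = 2 * t + 1 by push_cast; ring]
        field_simp

/-- stability of consecutive FTRL iterates with proximal
strongly convex regularizers. -/
theorem stmt_19 (n N s : ℕ) (hN : 1 ≤ N) (hs : 1 ≤ s)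
    (X : Set (EuclideanSpace ℝ (Fin n))) (D α B L : ℝ)
    (hXne : X.Nonempty) (hXcl : IsClosed X) (hXconv : Convex ℝ X)
    (hD : ∀ x ∈ X, ∀ y ∈ X, ‖x - y‖ ≤ D)
    (hα : 0 < α) (hB : 0 < B) (hL : 0 ≤ L)
    (xl : ℕ → Fin N → EuclideanSpace ℝ (Fin n))
    (hxl : ∀ l ∈ Finset.Icc 1 s, ∀ v, xl l v ∈ X)
    (w g : EuclideanSpace ℝ (Fin n)) (hg : ‖g‖ ≤ B * L)
    (xs xs1 : EuclideanSpace ℝ (Fin n))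
    (hxsX : xs ∈ X)
    (hxs : ∀ p ∈ X,
      ⟪w, xs⟫ + α * B / (2 * N) * ∑ l ∈ Finset.Icc 1 (s - 1), ∑ v, ‖xs - xl l v‖ ^ 2 ≤
        ⟪w, p⟫ + α * B / (2 * N) * ∑ l ∈ Finset.Icc 1 (s - 1), ∑ v, ‖p - xl l v‖ ^ 2)
    (hxs1X : xs1 ∈ X)
    (hxs1 : ∀ p ∈ X,
      ⟪w + g, xs1⟫ + α * B / (2 * N) * ∑ l ∈ Finset.Icc 1 s, ∑ v, ‖xs1 - xl l v‖ ^ 2 ≤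
        ⟪w + g, p⟫ + α * B / (2 * N) * ∑ l ∈ Finset.Icc 1 s, ∑ v, ‖p - xl l v‖ ^ 2) :
    ‖xs - xs1‖ ≤ 2 * L / (α * (2 * s - 1)) + 2 * D / (2 * s - 1) :=
  stmt_19_general n N s hN hs X D α B L hXconv hD hα hB hL xl hxl w g hg xs xs1 hxsX hxs hxs1X hxs1
end
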